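/- arXiv:1510.03461 — 2 statements merged into one kernel-verified Lean document; each statement's English description precedes it below -/
import Mathlib

section
/- Let d be a positive integer and let 0 < ε < 1 be a real. There exists a real δ > 0 such that: if G is a graph on [t] with d(G) ≤ d and x = (x_1,…,x_t) is a weight assignment with x_i ≥ 0, ∑_i x_i = 1, and p_G(x) ≥ d/(d+1) − δ, then there exists I ⊆ [t] with |I| ≤ d+1 such that ∑_{i∈I} x_i ≥ 1 − ε. -/
open Finset
open scoped BigOperators Classical

abbrev HG := Finset (Finset ℕ)

/-- The vertex set of a hypergraph: union of its edges. -/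
def hverts (G : HG) : Finset ℕ := G.sup id

/-- `G` is `r`-uniform: every edge has `r` vertices. -/
def Uniform (r : ℕ) (G : HG) : Prop := ∀ e ∈ G, e.card = r

/-- The pair `{u,v}` is covered in `G`: some edge contains both. -/
def Covered (G : HG) (u v : ℕ) : Prop := ∃ e ∈ G, u ∈ e ∧ v ∈ e

/-- `G` contains a copy of `F`. -/
def IsCopyIn (F G : HG) : Prop :=
  ∃ φ : ℕ → ℕ, Set.InjOn φ (hverts F : Set ℕ) ∧ ∀ e ∈ F, e.image φ ∈ G

/-- The subgraph of `G` induced by `C`. -/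
def induced (G : HG) (C : Finset ℕ) : HG := G.filter (fun e => e ⊆ C)

/-- `G` contains a member of the family `ℋ^F_p`: there is a core `C` of `p`
vertices such that the subgraph induced by `C` contains a copy of `F` and every
pair of vertices of `C` is covered in `G`. -/
def ContainsHFam (F : HG) (p : ℕ) (G : HG) : Prop :=
  ∃ C : Finset ℕ, C.card = p ∧ IsCopyIn F (induced G C) ∧
    ∀ u ∈ C, ∀ v ∈ C, u ≠ v → Covered G u v

/-- Turán number: maximum number of edges of an `r`-graph on vertex set `[n]`
satisfying the "freeness" predicate `P`. -/
noncomputable def exNum (r n : ℕ) (P : HG → Prop) : ℕ :=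
  sSup {m : ℕ | ∃ G : HG, Uniform r G ∧ (∀ e ∈ G, e ⊆ Finset.range n) ∧ P G ∧ G.card = m}

/-- The Lagrangian polynomial `p_G(x) = r! ∑_{e∈G} ∏_{i∈e} x_i`. -/
noncomputable def pPoly (r : ℕ) (G : HG) (x : ℕ → ℝ) : ℝ :=
  (r.factorial : ℝ) * ∑ e ∈ G, ∏ i ∈ e, x i

/-- The Lagrangian `λ(G)`. -/
noncomputable def lagrangian (r : ℕ) (G : HG) : ℝ :=
  sSup {v : ℝ | ∃ x : ℕ → ℝ, (∀ i, 0 ≤ x i) ∧ (∑ i ∈ hverts G, x i) = 1 ∧ v = pPoly r G x}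

/-- The Lagrangian density `π_λ(F)`. -/
noncomputable def piLambda (r : ℕ) (F : HG) : ℝ :=
  sSup {v : ℝ | ∃ G : HG, Uniform r G ∧ ¬ IsCopyIn F G ∧ v = lagrangian r G}

/-- `G` is `m`-partite. -/
def MPartite (m : ℕ) (G : HG) : Prop :=
  ∃ f : ℕ → Fin m, ∀ e ∈ G, ∀ u ∈ e, ∀ v ∈ e, u ≠ v → f u ≠ f v

/-- `ℋ^F_{m+1}` is `m`-stable. -/
def MStable (r m : ℕ) (F : HG) : Prop :=
  ∀ ε : ℝ, 0 < ε → ∃ δ : ℝ, 0 < δ ∧ ∃ n₁ : ℕ, ∀ n : ℕ, n₁ ≤ n →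
    ∀ G : HG, Uniform r G → (∀ e ∈ G, e ⊆ Finset.range n) →
      ¬ ContainsHFam F (m + 1) G →
      ((m.descFactorial r : ℝ) / (m : ℝ) ^ r - δ) * (n.choose r : ℝ) < (G.card : ℝ) →
      ∃ Z : Finset ℕ, (Z.card : ℝ) ≤ ε * n ∧
        MPartite m (G.filter (fun e => Disjoint e Z))

/-- Pairs of vertices of `C` not covered in `F`. -/
def uncovPairs (F : HG) (C : Finset ℕ) : Finset (Finset ℕ) :=
  (C.powersetCard 2).filter (fun s => ¬ ∃ e ∈ F, s ⊆ e)

/-- `H` is an expanded `p`-clique with an embedded `F` (i.e. a copy of `H^F_p`). -/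
def IsExpandedClique (r : ℕ) (F : HG) (p : ℕ) (H : HG) : Prop :=
  ∃ C : Finset ℕ, hverts F ⊆ C ∧ C.card = p ∧
    ∃ B : Finset ℕ → Finset ℕ,
      (∀ s ∈ uncovPairs F C, (B s).card = r - 2 ∧ Disjoint (B s) C) ∧
      (∀ s ∈ uncovPairs F C, ∀ t ∈ uncovPairs F C, s ≠ t → Disjoint (B s) (B t)) ∧
      H = F ∪ (uncovPairs F C).image (fun s => s ∪ B s)

/-- The balanced complete `m`-partite `r`-graph `T_r(n,m)` on vertex set `[n]`,
with parts the residue classes modulo `m`. -/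
def turanGraph (r n m : ℕ) : HG :=
  ((Finset.range n).powersetCard r).filter
    (fun e => ∀ u ∈ e, ∀ v ∈ e, u ≠ v → u % m ≠ v % m)

/-- `F` has a vertex of degree 1. -/
def HasDeg1Vertex (F : HG) : Prop :=
  ∃ v ∈ hverts F, (F.filter (fun e => v ∈ e)).card = 1

/-- `T` is a tree on `k` vertices (a connected 2-graph with `k-1` edges). -/
def IsTreeGraph (T : HG) (k : ℕ) : Prop :=
  Uniform 2 T ∧ (hverts T).card = k ∧ T.card + 1 = k ∧
    ∀ u ∈ hverts T, ∀ v ∈ hverts T,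
      Relation.ReflTransGen (fun a b => ({a, b} : Finset ℕ) ∈ T) u v

/-- The `k`-vertex tree `T` satisfies the Erdős–Sós conjecture:
`ex(n,T) ≤ n(k-2)/2` for all `n`. -/
def SatisfiesES (T : HG) (k : ℕ) : Prop :=
  ∀ n : ℕ, 2 * exNum 2 n (fun G => ¬ IsCopyIn T G) ≤ n * (k - 2)

/-- The function `f_r(x) = (∏_{i=1}^{r-1} (x+i-2)) / (x+r-3)^r`. -/
noncomputable def frf (r : ℕ) (x : ℝ) : ℝ :=
  (∏ i ∈ Finset.Icc 1 (r - 1), (x + (i : ℝ) - 2)) / (x + (r : ℝ) - 3) ^ r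

/-- `M` is the rightmost maximum of `f_r` on `[2,∞)`. -/
def IsRightmostMax (r : ℕ) (M : ℝ) : Prop :=
  2 ≤ M ∧ (∀ y : ℝ, 2 ≤ y → frf r y ≤ frf r M) ∧
    (∀ y : ℝ, 2 ≤ y → frf r y = frf r M → y ≤ M)

/-- `F` is the `(r-2)`-fold enlargement of the 2-graph `T`. -/
def IsEnlargement (r : ℕ) (T F : HG) : Prop :=
  ∃ D : Finset ℕ, D.card = r - 2 ∧ Disjoint D (hverts T) ∧ F = T.image (fun e => e ∪ D)

/-- The link of a vertex `i` in `G`. -/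
def link (G : HG) (i : ℕ) : HG := (G.filter (fun e => i ∈ e)).image (fun e => e.erase i)

/-- `λ_i = ∂p_G(x)/∂x_i = r! ∑_{f ∈ L_G(i)} ∏_{j∈f} x_j`. -/
noncomputable def lamI (r : ℕ) (G : HG) (x : ℕ → ℝ) (i : ℕ) : ℝ :=
  (r.factorial : ℝ) * ∑ f ∈ link G i, ∏ j ∈ f, x j

/-- `G` is a blowup of `L`. -/
def IsBlowup (L G : HG) : Prop :=
  ∃ V : ℕ → Finset ℕ,
    (∀ i ∈ hverts L, ∀ j ∈ hverts L, i ≠ j → Disjoint (V i) (V j)) ∧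
    ∀ e : Finset ℕ, e ∈ G ↔ ∃ f ∈ L, ∃ φ : ℕ → ℕ, (∀ i ∈ f, φ i ∈ V i) ∧ e = f.image φ

/-- `G` contains an `s`-sunflower with kernel `D`. -/
def HasSunflower (G : HG) (D : Finset ℕ) (s : ℕ) : Prop :=
  ∃ S : Finset (Finset ℕ), S ⊆ G ∧ S.card = s ∧ (∀ A ∈ S, D ⊆ A) ∧
    ∀ A ∈ S, ∀ B ∈ S, A ≠ B → A ∩ B = D

/-- `F` covers pairs: every pair of vertices of `F` lies in some edge. -/
def CoversPairs (F : HG) : Prop :=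
  ∀ u ∈ hverts F, ∀ v ∈ hverts F, u ≠ v → Covered F u v

/-- `d(G)`: the maximum average degree among nonempty subgraphs of `G`. -/
noncomputable def maxAvgDeg (G : HG) : ℝ :=
  sSup {v : ℝ | ∃ H : HG, H ⊆ G ∧ H.Nonempty ∧ v = 2 * (H.card : ℝ) / ((hverts H).card : ℝ)}

/-- Symmetrizing `v` to `u`: remove all edges containing `v` and replace them
with `{D ∪ {v} : D ∈ L_G(u)}`. -/
def symmetrize (G : HG) (u v : ℕ) : HG :=
  G.filter (fun e => v ∉ e) ∪ (G.filter (fun e => u ∈ e)).image (fun e => insert v (e.erase u))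

/-- The noncomplete transversals of an `m`-partite `r`-graph `L` with parts `A`. -/
noncomputable def noncompTrans (r m : ℕ) (L : HG) (A : Fin m → Finset ℕ) : Finset (Finset ℕ) :=
  ((Finset.univ.biUnion A).powerset).filter
    (fun S => (∀ i, (S ∩ A i).card = 1) ∧ ∃ e : Finset ℕ, e ⊆ S ∧ e.card = r ∧ e ∉ L)

/-!
Induction on `d`. A layer-cake argument turns `2 e(H) ≤ d v(H)` into the fractional bound
`p_G(x) ≤ d · max_i x_i`, so a near-extremal `x` has a vertex `v` of weight about `1/(d+1)`.
The graph induced on the neighbourhood `N` of `v` has maximum average degree at most `d - 1`, hence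
(by a Motzkin–Straus type bound) Lagrangian at most `(d-1)/d`. Comparing with `p_G(x)` shows that
almost no weight lies outside `{v} ∪ N` and that `x` restricted to `N` is near-extremal for `G[N]`;
the induction hypothesis then finds `d` vertices of `N` carrying almost all of its weight, and
together with `v` they form `I`. For `d = 1` the graph is a matching and the heaviest edge works.
-/

namespace LagrangianStability

def MaxAvgDegLE (c : ℝ) (G : HG) : Prop :=
  ∀ H : HG, H ⊆ G → H.Nonempty → 2 * (H.card : ℝ) ≤ c * ((hverts H).card : ℝ)

lemma MaxAvgDegLE.mono {c : ℝ} {G G' : HG} (h : MaxAvgDegLE c G) (hG' : G' ⊆ G) :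
    MaxAvgDegLE c G' :=
  fun H hH => h H (hH.trans hG')

lemma mem_hverts {G : HG} {i : ℕ} : i ∈ hverts G ↔ ∃ e ∈ G, i ∈ e := by
  simp [hverts]

lemma hverts_subset_iff {G : HG} {A : Finset ℕ} : hverts G ⊆ A ↔ ∀ e ∈ G, e ⊆ A :=
  Finset.sup_le_iff

lemma subset_hverts {G : HG} {e : Finset ℕ} (he : e ∈ G) : e ⊆ hverts G :=
  hverts_subset_iff.mp subset_rfl e he

lemma hverts_mono {G G' : HG} (h : G' ⊆ G) : hverts G' ⊆ hverts G :=
  Finset.sup_mono h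

lemma pPoly_two (G : HG) (x : ℕ → ℝ) : pPoly 2 G x = 2 * ∑ e ∈ G, ∏ i ∈ e, x i := by
  simp [pPoly]

lemma pPoly_div {r : ℕ} {G : HG} (hG : Uniform r G) (x : ℕ → ℝ) (c : ℝ) :
    pPoly r G (fun i => x i / c) = pPoly r G x / c ^ r := by
  simp only [pPoly, prod_div_distrib, prod_const, mul_div_assoc, sum_div]
  congr 1
  exact sum_congr rfl fun e he => by rw [hG e he]

lemma exists_eq_pair {e : Finset ℕ} (he : e.card = 2) {v : ℕ} (hv : v ∈ e) :
    ∃ j, j ≠ v ∧ e = {v, j} := by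
  obtain ⟨j, hj⟩ := card_eq_one.mp (by rw [card_erase_of_mem hv, he] : (e.erase v).card = 1)
  have hje : j ∈ e.erase v := by rw [hj]; exact mem_singleton_self j
  exact ⟨j, (mem_erase.mp hje).1, by rw [← insert_erase hv, hj]⟩

lemma eq_of_pair_eq_pair {v w w' : ℕ} (hw : w ≠ v) (h : ({v, w} : Finset ℕ) = {v, w'}) :
    w = w' := by
  have : w ∈ ({v, w'} : Finset ℕ) := h ▸ mem_insert_of_mem (mem_singleton_self w)
  simpa [hw] using this

lemma Uniform.mono {r : ℕ} {G G' : HG} (hG : Uniform r G) (hG' : G' ⊆ G) : Uniform r G' :=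
  fun e he => hG e (hG' he)

def nbr (G : HG) (v : ℕ) : Finset ℕ :=
  (hverts G).filter fun j => j ≠ v ∧ {v, j} ∈ G

lemma mem_nbr {G : HG} {v j : ℕ} : j ∈ nbr G v ↔ j ≠ v ∧ {v, j} ∈ G := by
  refine ⟨fun h => (mem_filter.mp h).2, fun h => mem_filter.mpr ⟨?_, h⟩⟩
  exact subset_hverts h.2 (by simp)

lemma nbr_subset_hverts (G : HG) (v : ℕ) : nbr G v ⊆ hverts G :=
  filter_subset _ _

lemma notMem_nbr (G : HG) (v : ℕ) : v ∉ nbr G v :=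
  fun h => (mem_nbr.mp h).1 rfl

lemma nbr_mono {G G' : HG} (h : G' ⊆ G) (v : ℕ) : nbr G' v ⊆ nbr G v :=
  fun _ hj => mem_nbr.mpr ⟨(mem_nbr.mp hj).1, h (mem_nbr.mp hj).2⟩

lemma nbr_subset_of_forall_subset {S : HG} {A : Finset ℕ} (hA : ∀ e ∈ S, e ⊆ A) (w : ℕ) :
    nbr S w ⊆ A :=
  fun _ hj => hA _ (mem_nbr.mp hj).2 (by simp)

lemma sum_filter_mem_prod {G : HG} (hG : Uniform 2 G) (v : ℕ) (x : ℕ → ℝ) :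
    ∑ e ∈ G with v ∈ e, ∏ i ∈ e, x i = x v * ∑ j ∈ nbr G v, x j := by
  rw [mul_sum]
  symm
  refine sum_bij (fun j _ => {v, j}) (fun j hj => ?_) (fun j hj j' hj' h => ?_)
    (fun e he => ?_) (fun j hj => ?_)
  · exact mem_filter.mpr ⟨(mem_nbr.mp hj).2, by simp⟩
  · exact eq_of_pair_eq_pair (mem_nbr.mp hj).1 h
  · obtain ⟨heG, hve⟩ := mem_filter.mp he
    obtain ⟨j, hjv, rfl⟩ := exists_eq_pair (hG e heG) hve
    exact ⟨j, mem_nbr.mpr ⟨hjv, heG⟩, rfl⟩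
  · rw [prod_pair (mem_nbr.mp hj).1.symm]

lemma sum_card_inter_mul_prod {S : HG} (hS : Uniform 2 S) (A : Finset ℕ) (x : ℕ → ℝ) :
    ∑ e ∈ S, ((A ∩ e).card : ℝ) * ∏ i ∈ e, x i = ∑ w ∈ A, x w * ∑ j ∈ nbr S w, x j := by
  simp_rw [← sum_filter_mem_prod hS, sum_filter]
  rw [sum_comm]
  refine sum_congr rfl fun e _ => ?_
  rw [← sum_filter, sum_const, nsmul_eq_mul, filter_mem_eq_inter]

lemma two_mul_sum_prod {S : HG} (hS : Uniform 2 S) {A : Finset ℕ} (hA : ∀ e ∈ S, e ⊆ A)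
    (x : ℕ → ℝ) :
    2 * ∑ e ∈ S, ∏ i ∈ e, x i = ∑ w ∈ A, x w * ∑ j ∈ nbr S w, x j := by
  rw [← sum_card_inter_mul_prod hS, mul_sum]
  refine sum_congr rfl fun e he => ?_
  rw [inter_eq_right.mpr (hA e he), hS e he, Nat.cast_two]

lemma MaxAvgDegLE.nonneg {c : ℝ} {G : HG} (hG : MaxAvgDegLE c G) (hne : G.Nonempty) :
    0 ≤ c := by
  have h := hG G subset_rfl hne
  have : (0 : ℝ) < G.card := by exact_mod_cast hne.card_pos
  nlinarith [(hverts G).card.cast_nonneg (α := ℝ)]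

lemma MaxAvgDegLE.hverts_nonempty {c : ℝ} {G : HG} (hG : MaxAvgDegLE c G)
    (hne : G.Nonempty) : (hverts G).Nonempty := by
  rw [nonempty_iff_ne_empty]
  intro hV
  have h := hG G subset_rfl hne
  rw [hV, card_empty, Nat.cast_zero, mul_zero] at h
  have : (0 : ℝ) < G.card := by exact_mod_cast hne.card_pos
  linarith

/-- Fractional form of `2 e(G) ≤ c v(G)`: it is the layer-cake sum of that bound over the
level sets of `x`. -/
theorem two_mul_sum_le_of_maxAvgDegLE {c : ℝ} {G : HG} (hG : MaxAvgDegLE c G) {x : ℕ → ℝ}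
    (hx : ∀ i ∈ hverts G, 0 ≤ x i) {g : Finset ℕ → ℝ} (hg : ∀ e ∈ G, ∀ i ∈ e, g e ≤ x i) :
    2 * ∑ e ∈ G, g e ≤ c * ∑ i ∈ hverts G, x i := by
  induction G using Finset.strongInduction generalizing x g with
  | H G ih =>
  rcases G.eq_empty_or_nonempty with rfl | hne
  · simp [hverts]
  obtain ⟨i₀, hi₀, hmin⟩ := exists_min_image (hverts G) x (hG.hverts_nonempty hne)
  set m := x i₀
  obtain ⟨e₀, he₀, hi₀e₀⟩ := mem_hverts.mp hi₀
  set G' := G.filter (i₀ ∉ ·)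
  have hG'V : hverts G' ⊆ hverts G := hverts_mono (filter_subset _ _)
  have ih' := ih G' (filter_ssubset.mpr ⟨e₀, he₀, not_not.mpr hi₀e₀⟩)
    (hG.mono (filter_subset _ _)) (x := fun i => x i - m) (g := fun e => g e - m)
    (fun i hi => sub_nonneg.mpr (hmin i (hG'V hi)))
    (fun e he i hi => sub_le_sub_right (hg e (mem_filter.mp he).1 i hi) m)
  have hedges : ∑ e ∈ G, g e ≤ ∑ e ∈ G', (g e - m) + m * G.card := by
    rw [← sum_filter_add_sum_filter_not G (i₀ ∉ ·), sum_sub_distrib, sum_const, nsmul_eq_mul,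
      ← card_filter_add_card_filter_not (s := G) (i₀ ∉ ·)]
    have : ∑ e ∈ G with ¬i₀ ∉ e, g e ≤ ∑ e ∈ G with ¬i₀ ∉ e, m :=
      sum_le_sum fun e he => hg e (mem_filter.mp he).1 i₀ (not_not.mp (mem_filter.mp he).2)
    rw [sum_const, nsmul_eq_mul] at this
    push_cast
    linarith
  have hverts_sum : ∑ i ∈ hverts G', (x i - m) ≤ ∑ i ∈ hverts G, (x i - m) :=
    sum_le_sum_of_subset_of_nonneg hG'V fun i hi _ => sub_nonneg.mpr (hmin i hi)
  have hcard := hG G subset_rfl hne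
  have hm : 0 ≤ m := hx i₀ hi₀
  have hc : 0 ≤ c := hG.nonneg hne
  have hsumV : ∑ i ∈ hverts G, (x i - m) = ∑ i ∈ hverts G, x i - (hverts G).card * m := by
    rw [sum_sub_distrib, sum_const, nsmul_eq_mul]
  rw [hsumV] at hverts_sum
  nlinarith [mul_le_mul_of_nonneg_left hcard hm, mul_le_mul_of_nonneg_left hverts_sum hc]

theorem pPoly_le_mul_of_le {c M : ℝ} {G : HG} (hG : Uniform 2 G) (hmad : MaxAvgDegLE c G)
    {x : ℕ → ℝ} (hx : ∀ i, 0 ≤ x i) (hM : ∀ i ∈ hverts G, x i ≤ M) :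
    pPoly 2 G x ≤ c * M * ∑ i ∈ hverts G, x i := by
  rw [pPoly_two, mul_assoc, mul_sum (hverts G) x M]
  refine two_mul_sum_le_of_maxAvgDegLE hmad
    (fun i hi => mul_nonneg ((hx i).trans (hM i hi)) (hx i)) fun e he i hi => ?_
  obtain ⟨j, hji, rfl⟩ := exists_eq_pair (hG e he) hi
  rw [prod_pair hji.symm, mul_comm M]
  exact mul_le_mul_of_nonneg_left (hM j (subset_hverts he (by simp))) (hx i)

/-- Adding the star from `v` to a subgraph `H` of its neighbourhood keeps it inside `G`, so the
bound for `G` forces `2 e(H) ≤ (c - 1) v(H)` once `v(H) ≥ c`; otherwise `H` is too small anyway. -/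
theorem MaxAvgDegLE.induced_nbr {c : ℝ} {G : HG} (hmad : MaxAvgDegLE c G) (hG : Uniform 2 G)
    (v : ℕ) : MaxAvgDegLE (c - 1) (induced G (nbr G v)) := by
  intro H hH hne
  set W := hverts H
  have hWN : W ⊆ nbr G v := hverts_subset_iff.mpr fun e he => (mem_filter.mp (hH he)).2
  set star := W.image fun w => ({v, w} : Finset ℕ)
  have hdisj : Disjoint H star := by
    refine disjoint_right.mpr fun e he heH => ?_
    obtain ⟨w, _, rfl⟩ := mem_image.mp he
    exact notMem_nbr G v (hWN (subset_hverts heH (mem_insert_self v {w})))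
  have hcard_star : star.card = W.card :=
    card_image_of_injOn fun w hw w' _ h => eq_of_pair_eq_pair (mem_nbr.mp (hWN hw)).1 h
  have hstarG : star ⊆ G := by
    intro e he
    obtain ⟨w, hw, rfl⟩ := mem_image.mp he
    exact (mem_nbr.mp (hWN hw)).2
  have hverts_le : (hverts (H ∪ star)).card ≤ W.card + 1 := by
    refine (card_le_card (hverts_subset_iff.mpr fun e he => ?_)).trans (card_insert_le v W)
    rcases mem_union.mp he with he | he
    · exact (subset_hverts he).trans (subset_insert v W)
    · obtain ⟨w, hw, rfl⟩ := mem_image.mp he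
      exact insert_subset_insert v (singleton_subset_iff.mpr hw)
  have hbig := hmad (H ∪ star) (union_subset (hH.trans (filter_subset _ _)) hstarG)
    (hne.mono subset_union_left)
  rw [card_union_of_disjoint hdisj, hcard_star] at hbig
  have hsmall : 2 * (H.card : ℝ) ≤ W.card * (W.card - 1) := by
    have h : H.card ≤ W.card.choose 2 := by
      rw [← card_powersetCard]
      exact card_le_card fun e he =>
        mem_powersetCard.mpr ⟨subset_hverts he, hG e (mem_filter.mp (hH he)).1⟩
    have := (Nat.cast_le (α := ℝ)).mpr h
    rw [Nat.cast_choose_two] at this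
    linarith
  have hc := hmad.nonneg (hne.mono (hH.trans (filter_subset _ _)))
  have hverts_le' : ((hverts (H ∪ star)).card : ℝ) ≤ W.card + 1 := by exact_mod_cast hverts_le
  push_cast at hbig
  rcases le_total c W.card with h | h <;> nlinarith [mul_le_mul_of_nonneg_left hverts_le' hc]

lemma sum_hverts_induced_le {G : HG} {x : ℕ → ℝ} (hx : ∀ i, 0 ≤ x i) (A : Finset ℕ) :
    ∑ i ∈ hverts (induced G A), x i ≤ ∑ i ∈ A, x i :=
  sum_le_sum_of_subset_of_nonneg (hverts_subset_iff.mpr fun _ he => (mem_filter.mp he).2)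
    fun i _ _ => hx i

theorem pPoly_le_of_maxAvgDegLE (m : ℕ) {G : HG} (hG : Uniform 2 G) (hmad : MaxAvgDegLE m G)
    {x : ℕ → ℝ} (hx : ∀ i, 0 ≤ x i) :
    pPoly 2 G x ≤ m / (m + 1) * (∑ i ∈ hverts G, x i) ^ 2 := by
  induction m generalizing G with
  | zero =>
    rcases G.eq_empty_or_nonempty with rfl | hne
    · simp [pPoly]
    · have h := hmad G subset_rfl hne
      rw [Nat.cast_zero, zero_mul] at h
      have : (0 : ℝ) < G.card := by exact_mod_cast hne.card_pos
      linarith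
  | succ m ih =>
    rcases G.eq_empty_or_nonempty with rfl | hne
    · simp [pPoly, hverts]
    obtain ⟨v, hv, hvmax⟩ :=
      exists_max_image (hverts G) (fun w => ∑ j ∈ nbr G w, x j) (hmad.hverts_nonempty hne)
    set N := nbr G v
    set u := ∑ j ∈ N, x j
    set S := ∑ i ∈ hverts G, x i
    have hinduced : pPoly 2 (induced G N) x ≤ m / (m + 1) * u ^ 2 := by
      refine (ih (G := induced G N) (Uniform.mono hG (filter_subset _ _))
        (by simpa using hmad.induced_nbr hG v)).trans ?_
      exact mul_le_mul_of_nonneg_left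
        (pow_le_pow_left₀ (sum_nonneg fun i _ => hx i) (sum_hverts_induced_le hx N) 2)
        (by positivity)
    set rest := G.filter fun e => ¬e ⊆ N
    have hrest : ∑ e ∈ rest, ∏ i ∈ e, x i ≤ (S - u) * u := calc
      ∑ e ∈ rest, ∏ i ∈ e, x i
          ≤ ∑ e ∈ rest, ((hverts G \ N ∩ e).card : ℝ) * ∏ i ∈ e, x i := by
        refine sum_le_sum fun e he => le_mul_of_one_le_left (prod_nonneg fun i _ => hx i) ?_
        obtain ⟨heG, heN⟩ := mem_filter.mp he
        obtain ⟨w, hwe, hwN⟩ := not_subset.mp heN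
        exact Nat.one_le_cast.mpr (card_pos.mpr ⟨w, by simp [hwN, hwe, subset_hverts heG hwe]⟩)
      _ = ∑ w ∈ hverts G \ N, x w * ∑ j ∈ nbr rest w, x j :=
        sum_card_inter_mul_prod (Uniform.mono hG (filter_subset _ _)) _ x
      _ ≤ ∑ w ∈ hverts G \ N, x w * u := by
        refine sum_le_sum fun w hw => mul_le_mul_of_nonneg_left ?_ (hx w)
        exact (sum_le_sum_of_subset_of_nonneg (nbr_mono (filter_subset _ _) w)
          fun i _ _ => hx i).trans (hvmax w (mem_sdiff.mp hw).1)
      _ = (S - u) * u := by rw [← sum_mul, sum_sdiff_eq_sub (nbr_subset_hverts G v)]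
    have hsplit : pPoly 2 G x = pPoly 2 (induced G N) x + 2 * ∑ e ∈ rest, ∏ i ∈ e, x i := by
      rw [pPoly_two, pPoly_two, induced, ← sum_filter_add_sum_filter_not G (· ⊆ N), mul_add]
    have hsq : m / (m + 1) * u ^ 2 + 2 * ((S - u) * u) ≤ (m + 1) / (m + 1 + 1) * S ^ 2 := by
      have key : (m + 1) / (m + 1 + 1) * S ^ 2 - (m / (m + 1) * u ^ 2 + 2 * ((S - u) * u))
          = ((m + 1) * S - (m + 2) * u) ^ 2 / ((m + 1) * (m + 2)) := by
        field_simp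
        ring
      have : 0 ≤ ((m + 1) * S - (m + 2) * u) ^ 2 / ((m + 1) * (m + 2)) := by positivity
      linarith
    push_cast
    linarith

/-- Splitting the vertices into `v`, its neighbourhood `N` and the rest `R`: the edges at `v`
contribute `2 x_v x(N)`, and every edge outside `N` avoiding `v` has an end in `R`. -/
theorem pPoly_le_of_nbr {G : HG} (hG : Uniform 2 G) {V : Finset ℕ} (hGV : ∀ e ∈ G, e ⊆ V)
    {x : ℕ → ℝ} (hx : ∀ i, 0 ≤ x i) (v : ℕ) :
    pPoly 2 G x ≤ 2 * x v * ∑ j ∈ nbr G v, x j + pPoly 2 (induced G (nbr G v)) x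
      + 2 * (∑ i ∈ V \ insert v (nbr G v), x i) * ∑ j ∈ nbr G v, x j
      + (∑ i ∈ V \ insert v (nbr G v), x i) ^ 2 := by
  set N := nbr G v
  set R := V \ insert v N
  set F := (G.filter fun e => ¬e ⊆ N).filter (v ∉ ·)
  have hsplit : pPoly 2 G x = pPoly 2 (induced G N) x
      + 2 * ∑ e ∈ (G.filter fun e => ¬e ⊆ N).filter (v ∈ ·), ∏ i ∈ e, x i
      + 2 * ∑ e ∈ F, ∏ i ∈ e, x i := by
    rw [pPoly_two, pPoly_two, induced, ← sum_filter_add_sum_filter_not G (· ⊆ N),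
      ← sum_filter_add_sum_filter_not (G.filter fun e => ¬e ⊆ N) (v ∈ ·)]
    ring
  have hstar : ∑ e ∈ (G.filter fun e => ¬e ⊆ N).filter (v ∈ ·), ∏ i ∈ e, x i
      ≤ x v * ∑ j ∈ N, x j :=
    (sum_le_sum_of_subset_of_nonneg (filter_subset_filter _ (filter_subset _ _))
      fun e _ _ => prod_nonneg fun i _ => hx i).trans_eq (sum_filter_mem_prod hG v x)
  have hFG : F ⊆ G := (filter_subset _ _).trans (filter_subset _ _)
  have hF : ∀ e ∈ F, e ⊆ N ∪ R := by
    intro e he i hi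
    have hve : v ∉ e := (mem_filter.mp he).2
    have hiV := hGV e (hFG he) hi
    simp only [R, mem_union, mem_sdiff, mem_insert]
    by_cases hiN : i ∈ N
    · exact Or.inl hiN
    · exact Or.inr ⟨hiV, fun h => h.elim (fun h => hve (h ▸ hi)) hiN⟩
  have hNR : ∀ w ∈ N, nbr F w ⊆ R := by
    intro w hw j hj
    have hwjF := mem_filter.mp (mem_nbr.mp hj).2
    have hwjG := mem_filter.mp hwjF.1
    simp only [R, mem_sdiff, mem_insert]
    refine ⟨hGV _ hwjG.1 (by simp), ?_⟩
    rintro (rfl | hjN)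
    · exact hwjF.2 (by simp)
    · exact hwjG.2 (insert_subset hw (singleton_subset_iff.mpr hjN))
  have hcross : 2 * ∑ e ∈ F, ∏ i ∈ e, x i ≤ 2 * (∑ i ∈ R, x i) * ∑ j ∈ N, x j
      + (∑ i ∈ R, x i) ^ 2 := calc
    2 * ∑ e ∈ F, ∏ i ∈ e, x i
        = ∑ w ∈ N, x w * ∑ j ∈ nbr F w, x j + ∑ w ∈ R, x w * ∑ j ∈ nbr F w, x j := by
      rw [two_mul_sum_prod (Uniform.mono hG hFG) hF,
        sum_union (disjoint_sdiff.mono_left (subset_insert v N))]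
    _ ≤ ∑ w ∈ N, x w * ∑ i ∈ R, x i + ∑ w ∈ R, x w * ∑ i ∈ N ∪ R, x i := by
      refine add_le_add (sum_le_sum fun w hw => mul_le_mul_of_nonneg_left ?_ (hx w))
        (sum_le_sum fun w _ => mul_le_mul_of_nonneg_left ?_ (hx w))
      · exact sum_le_sum_of_subset_of_nonneg (hNR w hw) fun i _ _ => hx i
      · exact sum_le_sum_of_subset_of_nonneg (nbr_subset_of_forall_subset hF w)
          fun i _ _ => hx i
    _ = 2 * (∑ i ∈ R, x i) * ∑ j ∈ N, x j + (∑ i ∈ R, x i) ^ 2 := by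
      rw [← sum_mul, ← sum_mul, sum_union (disjoint_sdiff.mono_left (subset_insert v N))]
      ring
  linarith

/-- With `y = (k+1)/(k+2) - u`, the upper bound on `p` reads `(k+2)/(k+1) y² ≤ δ + r²`, while
`p ≤ (k+1) a` gives `r ≤ y + δ`; together they force `r` and `y` to be small. -/
theorem stability_arith {k δ δ' ε a u r p q : ℝ} (hk : 1 ≤ k) (hδ : 0 < δ)
    (hδδ' : 20 * (k + 1) * δ ≤ δ') (hδε : 20 * (k + 1) * δ ≤ ε ^ 2)
    (hδ1 : 180 * (k + 1) * δ ≤ 1) (hε : 0 ≤ ε)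
    (ha : 0 ≤ a) (hu : 0 ≤ u) (hr : 0 ≤ r) (hsum : a + u + r = 1)
    (hp : (k + 1) / (k + 1 + 1) - δ ≤ p) (hpa : p ≤ (k + 1) * a)
    (hpq : p ≤ 2 * a * u + q + 2 * r * u + r ^ 2) (hq : q ≤ k / (k + 1) * u ^ 2) :
    0 < u ∧ (k / (k + 1) - δ') * u ^ 2 ≤ q ∧ 1 - ε ≤ a + (1 - ε / 4) * u := by
  set y := (k + 1) / (k + 1 + 1) - u with hy_def
  have hid : 2 * a * u + 2 * r * u + k / (k + 1) * u ^ 2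
      = (k + 1) / (k + 1 + 1) - (k + 1 + 1) / (k + 1) * y ^ 2 := by
    rw [hy_def, show a = 1 - u - r by linarith]
    field_simp
    ring
  have hy : (k + 1 + 1) / (k + 1) * y ^ 2 ≤ δ + r ^ 2 := by linarith
  have hry : r - δ ≤ y := by
    have : 1 / (k + 1 + 1) - δ ≤ a := by
      have : (k + 1) * (1 / (k + 1 + 1) - δ) ≤ (k + 1) * a := by
        have : (k + 1) * (1 / (k + 1 + 1)) = (k + 1) / (k + 1 + 1) := by ring
        nlinarith
      exact le_of_mul_le_mul_left this (by linarith)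
    have : (k + 1) / (k + 1 + 1) = 1 - 1 / (k + 1 + 1) := by field_simp; ring
    linarith
  have hy' : y ^ 2 ≤ (k + 1 + 1) / (k + 1) * y ^ 2 :=
    le_mul_of_one_le_left (sq_nonneg y) ((one_le_div (by linarith)).mpr (by linarith))
  have hr2 : r ^ 2 ≤ 4 * (k + 1) * δ := by
    rcases le_total r δ with h | h
    · nlinarith
    · have : (k + 1 + 1) * (r - δ) ^ 2 ≤ (k + 1) * (δ + r ^ 2) := by
        have h1 : (r - δ) ^ 2 ≤ y ^ 2 := pow_le_pow_left₀ (by linarith) hry 2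
        have h2 : (k + 1 + 1) / (k + 1) * (r - δ) ^ 2 ≤ δ + r ^ 2 :=
          (mul_le_mul_of_nonneg_left h1 (by positivity)).trans hy
        rwa [div_mul_eq_mul_div, div_le_iff₀ (by linarith), mul_comm (δ + r ^ 2)] at h2
      nlinarith
  have hu2 : 1 / 2 ≤ u := by
    have hy2 : y ^ 2 ≤ (1 / 6) ^ 2 := by nlinarith
    have : 2 / 3 ≤ (k + 1) / (k + 1 + 1) := by
      rw [div_le_div_iff₀ (by norm_num) (by linarith)]; linarith
    linarith [(abs_le_of_sq_le_sq' hy2 (by norm_num)).2]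
  have hkδ : δ ≤ k * δ := le_mul_of_one_le_left hδ.le hk
  refine ⟨by linarith, ?_, ?_⟩
  · have hyy : 0 ≤ (k + 1 + 1) / (k + 1) * y ^ 2 := by positivity
    have hu4 : δ' * (1 / 4) ≤ δ' * u ^ 2 :=
      mul_le_mul_of_nonneg_left (by nlinarith) (by nlinarith)
    linarith
  · have hrε : r ≤ ε / 2 := (pow_le_pow_iff_left₀ hr (by positivity) two_ne_zero).mp
      (by linarith [sq_nonneg ε])
    have : ε * u ≤ ε * 1 := mul_le_mul_of_nonneg_left (by linarith) hε
    linarith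

def IsStableAt (d : ℕ) (ε δ : ℝ) : Prop :=
  ∀ (V : Finset ℕ) (G : HG), Uniform 2 G → (∀ e ∈ G, e ⊆ V) → MaxAvgDegLE d G →
    ∀ x : ℕ → ℝ, (∀ i, 0 ≤ x i) → ∑ i ∈ V, x i = 1 →
      (d : ℝ) / ((d : ℝ) + 1) - δ ≤ pPoly 2 G x →
      ∃ I ⊆ V, I.card ≤ d + 1 ∧ 1 - ε ≤ ∑ i ∈ I, x i

theorem MaxAvgDegLE.pairwiseDisjoint {G : HG} (hmad : MaxAvgDegLE 1 G) (hG : Uniform 2 G) :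
    (G : Set (Finset ℕ)).PairwiseDisjoint id := by
  intro e he f hf hef
  refine disjoint_left.mpr fun w hwe hwf => ?_
  have h := hmad {e, f} (insert_subset he (singleton_subset_iff.mpr hf)) (insert_nonempty _ _)
  have h3 : (e ∪ f).card ≤ 3 := by
    have := card_union_add_card_inter e f
    have : 1 ≤ (e ∩ f).card := card_pos.mpr ⟨w, mem_inter.mpr ⟨hwe, hwf⟩⟩
    have := hG e he
    have := hG f hf
    omega
  rw [card_pair hef, show hverts {e, f} = e ∪ f by simp [hverts]] at h
  have : ((e ∪ f).card : ℝ) ≤ 3 := by exact_mod_cast h3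
  push_cast at h
  linarith

/-- For a matching, `4 x_i x_j ≤ (x_i + x_j) s` for the heaviest edge weight `s`, and the edge
weights sum to at most `1`. -/
theorem isStableAt_one (ε : ℝ) : IsStableAt 1 ε (ε / 2) := by
  intro V G hG hGV hmad x hx hsum hp
  rw [Nat.cast_one] at hmad
  norm_num at hp
  rcases G.eq_empty_or_nonempty with rfl | hne
  · refine ⟨∅, empty_subset V, by simp, ?_⟩
    simp only [pPoly, sum_empty, mul_zero] at hp
    simp only [sum_empty]
    linarith
  obtain ⟨e₀, he₀, hmax⟩ := exists_max_image G (fun e => ∑ i ∈ e, x i) hne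
  refine ⟨e₀, hGV e₀ he₀, by rw [hG e₀ he₀], ?_⟩
  have hs : 0 ≤ ∑ i ∈ e₀, x i := sum_nonneg fun i _ => hx i
  have hcover : ∑ e ∈ G, ∑ i ∈ e, x i ≤ 1 := by
    rw [← hsum]
    refine (sum_biUnion (f := x) (hmad.pairwiseDisjoint hG)).symm.trans_le ?_
    exact sum_le_sum_of_subset_of_nonneg (biUnion_subset.mpr hGV) fun i _ _ => hx i
  calc 1 - ε ≤ 2 * pPoly 2 G x := by linarith
    _ = ∑ e ∈ G, 4 * ∏ i ∈ e, x i := by rw [pPoly_two, ← mul_assoc, mul_sum]; norm_num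
    _ ≤ ∑ e ∈ G, (∑ i ∈ e, x i) * ∑ i ∈ e₀, x i := by
      refine sum_le_sum fun e he => ?_
      obtain ⟨i, j, hij, rfl⟩ := card_eq_two.mp (hG e he)
      have := hmax _ he
      rw [prod_pair hij, sum_pair hij] at *
      nlinarith [sq_nonneg (x i - x j), hx i, hx j]
    _ ≤ ∑ i ∈ e₀, x i := by rw [← sum_mul]; nlinarith

theorem isStableAt_succ {d : ℕ} (hd : 1 ≤ d) {ε δ δ' : ℝ} (hε : 0 ≤ ε) (hδ : 0 < δ)
    (hδδ' : 20 * (d + 1) * δ ≤ δ') (hδε : 20 * (d + 1) * δ ≤ ε ^ 2)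
    (hδ1 : 180 * (d + 1) * δ ≤ 1) (h : IsStableAt d (ε / 4) δ') :
    IsStableAt (d + 1) ε δ := by
  intro V G hG hGV hmad x hx hsum hp
  push_cast at hmad hp
  obtain ⟨v, hv, hvmax⟩ := exists_max_image V x (nonempty_of_sum_ne_zero (hsum ▸ one_ne_zero))
  set N := nbr G v
  have hNV : N ⊆ V := (nbr_subset_hverts G v).trans (hverts_subset_iff.mpr hGV)
  have hsum3 : x v + ∑ i ∈ N, x i + ∑ i ∈ V \ insert v N, x i = 1 := by
    rw [sum_sdiff_eq_sub (insert_subset hv hNV), sum_insert (notMem_nbr G v), hsum]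
    ring
  have hpa : pPoly 2 G x ≤ (d + 1) * x v := by
    refine (pPoly_le_mul_of_le hG hmad hx fun i hi =>
      hvmax i (hverts_subset_iff.mpr hGV hi)).trans
      (mul_le_of_le_one_right (mul_nonneg (by positivity) (hx v)) ?_)
    exact hsum ▸ sum_le_sum_of_subset_of_nonneg (hverts_subset_iff.mpr hGV) fun i _ _ => hx i
  have hGN : MaxAvgDegLE d (induced G N) := by simpa using hmad.induced_nbr hG v
  have hGNu : Uniform 2 (induced G N) := Uniform.mono hG (filter_subset _ _)
  have hq : pPoly 2 (induced G N) x ≤ d / (d + 1) * (∑ i ∈ N, x i) ^ 2 := by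
    refine (pPoly_le_of_maxAvgDegLE d hGNu hGN hx).trans ?_
    exact mul_le_mul_of_nonneg_left
      (pow_le_pow_left₀ (sum_nonneg fun i _ => hx i) (sum_hverts_induced_le hx N) 2)
      (by positivity)
  obtain ⟨hu, hqN, hfinal⟩ := stability_arith (by exact_mod_cast hd) hδ hδδ' hδε hδ1 hε (hx v)
    (sum_nonneg fun i _ => hx i) (sum_nonneg fun i _ => hx i) hsum3 hp hpa
    (pPoly_le_of_nbr hG hGV hx v) hq
  obtain ⟨J, hJN, hJcard, hJ⟩ := h N (induced G N) hGNu (fun e he => (mem_filter.mp he).2) hGN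
    (fun i => x i / ∑ j ∈ N, x j) (fun i => div_nonneg (hx i) hu.le)
    (by rw [← sum_div, div_self hu.ne'])
    (by rw [pPoly_div hGNu, le_div_iff₀ (by positivity)]; linarith)
  refine ⟨insert v J, insert_subset hv (hJN.trans hNV), (card_insert_le v J).trans (by omega), ?_⟩
  rw [sum_insert fun hvJ => notMem_nbr G v (hJN hvJ)]
  rw [← sum_div, le_div_iff₀ hu] at hJ
  linarith

theorem exists_isStableAt {d : ℕ} (hd : 1 ≤ d) {ε : ℝ} (hε : 0 < ε) :
    ∃ δ > 0, IsStableAt d ε δ := by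
  induction d, hd using Nat.le_induction generalizing ε with
  | base => exact ⟨ε / 2, by positivity, isStableAt_one ε⟩
  | succ d hd ih =>
    obtain ⟨δ', hδ', h⟩ := ih (ε := ε / 4) (by positivity)
    set δ := min δ' (min (ε ^ 2) (1 / 9)) / (20 * ((d : ℝ) + 1)) with hδ
    have h20 : 20 * ((d : ℝ) + 1) * δ = min δ' (min (ε ^ 2) (1 / 9)) := by
      rw [hδ]
      field_simp
    refine ⟨δ, by positivity, isStableAt_succ hd hε.le (by positivity) ?_ ?_ ?_ h⟩
    · exact h20 ▸ min_le_left _ _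
    · exact h20 ▸ (min_le_right _ _).trans (min_le_left _ _)
    · have : 20 * ((d : ℝ) + 1) * δ ≤ 1 / 9 :=
        h20 ▸ (min_le_right _ _).trans (min_le_right _ _)
      linarith

end LagrangianStability

theorem stmt_17_general (d : ℕ) (hd : 0 < d) (ε : ℝ) (hε0 : 0 < ε) :
    ∃ δ : ℝ, 0 < δ ∧
      ∀ t : ℕ, ∀ G : HG, Uniform 2 G → (∀ e ∈ G, e ⊆ Finset.range t) →
        (∀ H : HG, H ⊆ G → H.Nonempty →
          2 * (H.card : ℝ) ≤ (d : ℝ) * ((hverts H).card : ℝ)) →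
        ∀ x : ℕ → ℝ, (∀ i, 0 ≤ x i) → (∑ i ∈ Finset.range t, x i) = 1 →
          (d : ℝ) / ((d : ℝ) + 1) - δ ≤ pPoly 2 G x →
          ∃ I : Finset ℕ, I ⊆ Finset.range t ∧ I.card ≤ d + 1 ∧
            1 - ε ≤ ∑ i ∈ I, x i := by
  obtain ⟨δ, hδ, h⟩ := LagrangianStability.exists_isStableAt hd hε0
  exact ⟨δ, hδ, fun t => h (Finset.range t)⟩

/-- Stability of the Lagrangian for graphs of bounded maximum
average degree. -/
theorem stmt_17 (d : ℕ) (hd : 0 < d) (ε : ℝ) (hε0 : 0 < ε) (hε1 : ε < 1) :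
    ∃ δ : ℝ, 0 < δ ∧
      ∀ t : ℕ, ∀ G : HG, Uniform 2 G → (∀ e ∈ G, e ⊆ Finset.range t) →
        (∀ H : HG, H ⊆ G → H.Nonempty →
          2 * (H.card : ℝ) ≤ (d : ℝ) * ((hverts H).card : ℝ)) →
        ∀ x : ℕ → ℝ, (∀ i, 0 ≤ x i) → (∑ i ∈ Finset.range t, x i) = 1 →
          (d : ℝ) / ((d : ℝ) + 1) - δ ≤ pPoly 2 G x →
          ∃ I : Finset ℕ, I ⊆ Finset.range t ∧ I.card ≤ d + 1 ∧
            1 - ε ≤ ∑ i ∈ I, x i :=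
  stmt_17_general d hd ε hε0
end

section
/- Let k ≥ 3 be an integer and let T be a k-vertex tree that satisfies the Erdős–Sós conjecture. For every real 0 < ε < 1 there exists a real δ > 0 such that: if G is a T-free graph on [t] and x = (x_1,…,x_t) is a weight assignment with x_i ≥ 0, ∑_i x_i = 1, and p_G(x) ≥ (k−2)/(k−1) − δ, then there exists I ⊆ [t] with |I| ≤ k−1 such that ∑_{i∈I} x_i ≥ 1 − ε. -/
open Finset
open scoped BigOperators Classical

/-!
By the Erdős–Sós property every `T`-free graph is `(k - 2)`-degenerate. Hence it is properly
`(k - 1)`-colourable, and if all its vertices have weight at most `τ`, its Lagrangian is `O(kτ)`.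

For a proper colouring with class weights `Y_a`, the Lagrangian is at most `1 - ∑ Y_a²` minus the
weight of the non-adjacent pairs of distinct colours. If it is within `δ` of `1 - 1/(k - 1)`, then
every `Y_a` is close to `1/(k - 1)` and those non-adjacent pairs carry weight at most `δ`. So heavy
vertices (of weight at least `τ`, where `δ < τ²`) of distinct colours are adjacent; and since a
`k`-vertex tree embeds in `K_{k-2}` joined to two independent vertices, no two vertices outside a
clique of `k - 2` heavy vertices see all of it. If every class is heavy, it follows that one heavy
vertex per class carries all but `δ/τ` of the weight. If exactly one class is light, it is too
light for `Y_a ≈ 1/(k - 1)`. If two or more classes are light, merging them leaves at most `k - 2`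
colours for the edges outside the sparse light part, so the Lagrangian is about `1 - 1/(k - 2)`,
which is too small.
-/

lemma mem_hverts {G : HG} {a : ℕ} : a ∈ hverts G ↔ ∃ e ∈ G, a ∈ e := by
  simp [hverts]

lemma subset_hverts {G : HG} {e : Finset ℕ} (he : e ∈ G) : e ⊆ hverts G :=
  fun _ ha => mem_hverts.2 ⟨e, he, ha⟩

lemma IsCopyIn.mono {F G G' : HG} (hc : IsCopyIn F G) (h : G ⊆ G') : IsCopyIn F G' := by
  obtain ⟨φ, hφ, hF⟩ := hc
  exact ⟨φ, hφ, fun e he => h (hF e he)⟩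

lemma Uniform.mono {r : ℕ} {G G' : HG} (hG : Uniform r G') (h : G ⊆ G') : Uniform r G :=
  fun e he => hG e (h he)

lemma Uniform.eq_pair {G : HG} (hG : Uniform 2 G) {e : Finset ℕ} (he : e ∈ G) {a b : ℕ}
    (ha : a ∈ e) (hb : b ∈ e) (hab : a ≠ b) : e = {a, b} :=
  (eq_of_subset_of_card_le (by simp [insert_subset_iff, ha, hb])
    (by rw [hG e he, card_pair hab])).symm

lemma exists_injOn_map_pair {A W : Finset ℕ} {p₁ p₂ v₁ v₂ : ℕ} (hp₁ : p₁ ∈ A) (hp₂ : p₂ ∈ A)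
    (hp : p₁ ≠ p₂) (h₁ : v₁ ∉ W) (h₂ : v₂ ∉ W) (hv : v₁ ≠ v₂) (hA : #A = #W + 2) :
    ∃ φ : ℕ → ℕ, Set.InjOn φ A ∧ φ p₁ = v₁ ∧ φ p₂ = v₂ ∧
      ∀ z ∈ A, z ≠ p₁ → z ≠ p₂ → φ z ∈ W := by
  set R := (A.erase p₁).erase p₂
  have hp₂' : p₂ ∈ A.erase p₁ := mem_erase.2 ⟨hp.symm, hp₂⟩
  have hR : ∀ {z}, z ∈ R ↔ z ∈ A ∧ z ≠ p₁ ∧ z ≠ p₂ := by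
    simp only [R, mem_erase]
    tauto
  have hRW : #R = #W := by
    rw [card_erase_of_mem hp₂', card_erase_of_mem hp₁, hA]
    rfl
  obtain ⟨g, hg⟩ := R.finite_toSet.exists_bijOn_of_encard_eq (t := (W : Set ℕ))
    (by rw [Set.encard_coe_eq_coe_finsetCard, Set.encard_coe_eq_coe_finsetCard, hRW])
  set φ : ℕ → ℕ := fun z => if z = p₁ then v₁ else if z = p₂ then v₂ else g z
  have hφR : Set.EqOn φ g R := fun z hz => by simp [φ, (hR.1 hz).2.1, (hR.1 hz).2.2]
  have hφW : ∀ z ∈ R, φ z ∈ W := fun z hz => hφR hz ▸ hg.mapsTo hz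
  have hφ₁ : φ p₁ = v₁ := by simp [φ]
  have hφ₂ : φ p₂ = v₂ := by simp [φ, hp.symm]
  refine ⟨φ, ?_, hφ₁, hφ₂, fun z hz h1 h2 => hφW z (hR.2 ⟨hz, h1, h2⟩)⟩
  have hA' : (A : Set ℕ) = insert p₁ (insert p₂ (R : Set ℕ)) := by
    rw [← coe_insert, ← coe_insert, insert_erase hp₂', insert_erase hp₁]
  rw [hA', Set.injOn_insert (by simp [hp, hR]), Set.injOn_insert (by simp [hR])]
  refine ⟨⟨hg.injOn.congr hφR.symm, ?_⟩, ?_⟩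
  · rintro ⟨z, hz, hz'⟩
    exact h₂ (hφ₂ ▸ hz' ▸ hφW z hz)
  · rintro ⟨z, rfl | hz, hz'⟩
    · exact hv (hφ₁ ▸ hφ₂ ▸ hz'.symm)
    · exact h₁ (hφ₁ ▸ hz' ▸ hφW z hz)

theorem IsTreeGraph.exists_nonadj {k : ℕ} {T : HG} (hk : 3 ≤ k) (hT : IsTreeGraph T k) :
    ∃ p₁ ∈ hverts T, ∃ p₂ ∈ hverts T, p₁ ≠ p₂ ∧ {p₁, p₂} ∉ T := by
  obtain ⟨-, hV, hE, -⟩ := hT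
  have hlt : #T < #((hverts T).powersetCard 2) := by
    obtain ⟨n, rfl⟩ : ∃ n, k = n + 1 := ⟨k - 1, by omega⟩
    rw [card_powersetCard, hV, Nat.choose_succ_succ, Nat.choose_one_right]
    have := Nat.choose_pos (show 2 ≤ n by omega)
    change #T < n + n.choose 2
    omega
  obtain ⟨s, hs, hsT⟩ := exists_mem_notMem_of_card_lt_card hlt
  obtain ⟨hsV, hs2⟩ := mem_powersetCard.1 hs
  obtain ⟨a, b, hab, rfl⟩ := card_eq_two.1 hs2
  exact ⟨a, hsV (by simp), b, hsV (by simp), hab, hsT⟩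

/-- Map a non-adjacent pair of vertices of the tree onto `v₁, v₂` and the other `k - 2` vertices
onto the clique `W`. -/
theorem IsTreeGraph.isCopyIn_of_join {k : ℕ} {T G : HG} (hk : 3 ≤ k) (hT : IsTreeGraph T k)
    {W : Finset ℕ} (hW : #W = k - 2) (hWG : ∀ a ∈ W, ∀ b ∈ W, a ≠ b → {a, b} ∈ G)
    {v₁ v₂ : ℕ} (h₁ : v₁ ∉ W) (h₂ : v₂ ∉ W) (hne : v₁ ≠ v₂)
    (hv₁ : ∀ b ∈ W, {v₁, b} ∈ G) (hv₂ : ∀ b ∈ W, {v₂, b} ∈ G) : IsCopyIn T G := by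
  obtain ⟨p₁, hp₁, p₂, hp₂, hp, hpT⟩ := hT.exists_nonadj hk
  obtain ⟨φ, hinj, hφ₁, hφ₂, hφW⟩ :=
    exists_injOn_map_pair hp₁ hp₂ hp h₁ h₂ hne (by rw [hT.2.1, hW]; omega)
  have hadj : ∀ c ∈ hverts T, ∀ z ∈ hverts T, z ≠ p₁ → z ≠ p₂ → c ≠ z → {φ c, φ z} ∈ G := by
    intro c hc z hz hz₁ hz₂ hcz
    obtain rfl | hc₁ := eq_or_ne c p₁
    · exact hφ₁ ▸ hv₁ _ (hφW z hz hz₁ hz₂)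
    obtain rfl | hc₂ := eq_or_ne c p₂
    · exact hφ₂ ▸ hv₂ _ (hφW z hz hz₁ hz₂)
    exact hWG _ (hφW c hc hc₁ hc₂) _ (hφW z hz hz₁ hz₂) (hinj.ne hc hz hcz)
  refine ⟨φ, hinj, fun e he => ?_⟩
  obtain ⟨a, b, hab, rfl⟩ := card_eq_two.1 (hT.1 e he)
  have ha : a ∈ hverts T := subset_hverts he (by simp)
  have hb : b ∈ hverts T := subset_hverts he (by simp)
  rw [image_insert, image_singleton]
  by_cases hb' : b ≠ p₁ ∧ b ≠ p₂
  · exact hadj a ha b hb hb'.1 hb'.2 hab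
  by_cases ha' : a ≠ p₁ ∧ a ≠ p₂
  · rw [pair_comm]
    exact hadj b hb a ha ha'.1 ha'.2 hab.symm
  have ha'' : a = p₁ ∨ a = p₂ := by tauto
  have hb'' : b = p₁ ∨ b = p₂ := by tauto
  rcases ha'' with rfl | rfl <;> rcases hb'' with rfl | rfl
  · exact absurd rfl hab
  · exact absurd he hpT
  · exact absurd (pair_comm b a ▸ he) hpT
  · exact absurd rfl hab

lemma IsCopyIn.of_image {F H : HG} {S : Finset ℕ} {σ : ℕ → ℕ} (hσ : Set.InjOn σ S)
    (hH : ∀ e ∈ H, e ⊆ S) (h : IsCopyIn F (H.image (·.image σ))) : IsCopyIn F H := by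
  obtain ⟨φ, hφ, hF⟩ := h
  set τ := Function.invFunOn σ S
  have hback : ∀ e ∈ H, (e.image σ).image τ = e := fun e he => by
    rw [image_image]
    conv_rhs => rw [← image_id (s := e)]
    exact image_congr fun a ha => hσ.leftInvOn_invFunOn (mem_coe.2 (hH e he ha))
  have hmaps : Set.MapsTo φ (hverts F) (σ '' S) := by
    intro a ha
    obtain ⟨e, he, hae⟩ := mem_hverts.1 ha
    obtain ⟨h, hh, hhe⟩ := mem_image.1 (hF e he)
    obtain ⟨b, hb, hba⟩ := mem_image.1 (hhe ▸ mem_image_of_mem φ hae)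
    exact ⟨b, hH h hh hb, hba⟩
  refine ⟨τ ∘ φ, (Function.invFunOn_injOn_image σ S).comp hφ hmaps, fun e he => ?_⟩
  obtain ⟨h, hh, hhe⟩ := mem_image.1 (hF e he)
  rw [← image_image, ← hhe, hback h hh]
  exact hh

lemma card_le_exNum {r n : ℕ} {P : HG → Prop} {G : HG} (hG : Uniform r G)
    (hGn : ∀ e ∈ G, e ⊆ range n) (hP : P G) : #G ≤ exNum r n P := by
  refine le_csSup ⟨#((range n).powersetCard r), ?_⟩ ⟨G, hG, hGn, hP, rfl⟩
  rintro _ ⟨H, hH, hHn, -, rfl⟩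
  exact card_le_card fun e he => mem_powersetCard.2 ⟨hHn e he, hH e he⟩

/-- `SatisfiesES` only speaks of graphs on `range n`: relabel the vertices of `H` as
`0, …, n - 1`. -/
theorem SatisfiesES.two_mul_card_le {k : ℕ} {T H : HG} (hES : SatisfiesES T k)
    (hH : Uniform 2 H) (hfree : ¬ IsCopyIn T H) : 2 * #H ≤ #(hverts H) * (k - 2) := by
  set S := hverts H
  set σ : ℕ → ℕ := fun z => if h : z ∈ S then S.equivFin ⟨z, h⟩ else 0
  have hσ : Set.InjOn σ S := fun a ha b hb hab => by
    simpa [σ, mem_coe.1 ha, mem_coe.1 hb, Fin.val_inj] using hab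
  have hHS : ∀ e ∈ H, e ⊆ S := fun e he => subset_hverts he
  have hinj : Set.InjOn (·.image σ) (H : Set (Finset ℕ)) := fun e he e' he' h => by
    have h' : σ '' e = σ '' e' := by simpa [← coe_image] using congrArg ((↑) : _ → Set ℕ) h
    exact coe_inj.1 ((hσ.image_eq_image_iff (coe_subset.2 (hHS e he))
      (coe_subset.2 (hHS e' he'))).1 h')
  have hU : Uniform 2 (H.image (·.image σ)) := by
    simp only [Uniform, mem_image, forall_exists_index, and_imp, forall_apply_eq_imp_iff₂]
    intro e he
    rw [card_image_of_injOn (hσ.mono (coe_subset.2 (hHS e he))), hH e he]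
  have hrange : ∀ e ∈ H.image (·.image σ), e ⊆ range #S := by
    simp only [mem_image, forall_exists_index, and_imp, forall_apply_eq_imp_iff₂]
    intro e he
    rw [image_subset_iff]
    intro z hz
    simp [σ, hHS e he hz]
  calc 2 * #H = 2 * #(H.image (·.image σ)) := by rw [card_image_of_injOn hinj]
    _ ≤ 2 * exNum 2 #S (fun G => ¬ IsCopyIn T G) :=
        Nat.mul_le_mul_left _ (card_le_exNum hU hrange fun h => hfree (h.of_image hσ hHS))
    _ ≤ #S * (k - 2) := hES _

theorem SatisfiesES.exists_degree_le {k : ℕ} {T H : HG} (hES : SatisfiesES T k)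
    (hH : Uniform 2 H) (hfree : ¬ IsCopyIn T H) (hne : H.Nonempty) :
    ∃ v ∈ hverts H, #{e ∈ H | v ∈ e} ≤ k - 2 := by
  by_contra! hdeg
  have hsum : #(hverts H) * (k - 2 + 1) ≤ 2 * #H := by
    calc #(hverts H) * (k - 2 + 1) ≤ ∑ e ∈ H, #(hverts H ∩ e) := le_sum_card_inter hdeg
      _ = ∑ e ∈ H, 2 := sum_congr rfl fun e he => by
          rw [inter_eq_right.2 (subset_hverts he), hH e he]
      _ = 2 * #H := by rw [sum_const, smul_eq_mul, mul_comm]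
  obtain ⟨e, he⟩ := hne
  obtain ⟨a, ha⟩ : e.Nonempty := card_pos.1 (by rw [hH e he]; norm_num)
  have hV : 0 < #(hverts H) := card_pos.2 ⟨a, subset_hverts he ha⟩
  have := hES.two_mul_card_le hH hfree
  nlinarith

theorem SatisfiesES.induction_on {k : ℕ} {T : HG} (hES : SatisfiesES T k) {P : HG → Prop}
    (empty : P ∅)
    (step : ∀ H v, Uniform 2 H → v ∈ hverts H → #{e ∈ H | v ∈ e} ≤ k - 2 →
      P {e ∈ H | v ∉ e} → P H)
    (H : HG) (hH : Uniform 2 H) (hfree : ¬ IsCopyIn T H) : P H := by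
  induction H using Finset.strongInduction with
  | H H ih =>
  obtain rfl | hne := H.eq_empty_or_nonempty
  · exact empty
  obtain ⟨v, hv, hdeg⟩ := hES.exists_degree_le hH hfree hne
  obtain ⟨e, he, hve⟩ := mem_hverts.1 hv
  refine step H v hH hv hdeg (ih _ ?_ (hH.mono (filter_subset _ _))
    fun h => hfree (h.mono (filter_subset _ _)))
  exact filter_ssubset.2 ⟨e, he, not_not.2 hve⟩

/-- Greedy colouring along the degeneracy order. -/
theorem SatisfiesES.mPartite {k : ℕ} {T G : HG} (hES : SatisfiesES T k) (hk : 2 ≤ k)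
    (hG : Uniform 2 G) (hfree : ¬ IsCopyIn T G) : MPartite (k - 1) G := by
  refine hES.induction_on ⟨fun _ => ⟨0, by omega⟩, by simp⟩ ?_ G hG hfree
  rintro H v hH - hdeg ⟨f, hf⟩
  set used := {e ∈ H | v ∈ e}.biUnion fun e => (e.erase v).image f
  have hused : #used < #(univ : Finset (Fin (k - 1))) := by
    calc #used ≤ ∑ e ∈ {e ∈ H | v ∈ e}, #((e.erase v).image f) := card_biUnion_le
      _ ≤ ∑ e ∈ {e ∈ H | v ∈ e}, 1 := sum_le_sum fun e he => card_image_le.trans (by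
          rw [card_erase_of_mem (mem_filter.1 he).2, hH e (mem_filter.1 he).1])
      _ < #(univ : Finset (Fin (k - 1))) := by simp; omega
  obtain ⟨c, -, hc⟩ := exists_mem_notMem_of_card_lt_card hused
  refine ⟨Function.update f v c, fun e he a ha b hb hab => ?_⟩
  by_cases hve : v ∈ e
  · have hother : ∀ z ∈ e, z ≠ v → Function.update f v c z ≠ c := fun z hz hzv h => by
      rw [Function.update_of_ne hzv] at h
      exact hc (mem_biUnion.2 ⟨e, mem_filter.2 ⟨he, hve⟩,
        mem_image.2 ⟨z, mem_erase.2 ⟨hzv, hz⟩, h⟩⟩)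
    obtain rfl | hav := eq_or_ne a v
    · simpa using (hother b hb hab.symm).symm
    obtain rfl | hbv := eq_or_ne b v
    · simpa using hother a ha hav
    exact absurd (hH.eq_pair he ha hb hab ▸ hve) (by simp [hav.symm, hbv.symm])
  · rw [Function.update_of_ne (ne_of_mem_of_not_mem ha hve),
      Function.update_of_ne (ne_of_mem_of_not_mem hb hve)]
    exact hf e (mem_filter.2 ⟨he, hve⟩) a ha b hb hab

theorem SatisfiesES.sum_prod_le {k : ℕ} {T : HG} (hES : SatisfiesES T k) {x : ℕ → ℝ}
    (hx : ∀ i, 0 ≤ x i) {τ : ℝ} {H : HG} (hH : Uniform 2 H) (hfree : ¬ IsCopyIn T H)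
    (hτ : ∀ i ∈ hverts H, x i ≤ τ) :
    ∑ e ∈ H, ∏ i ∈ e, x i ≤ (k - 2 : ℕ) * τ * ∑ i ∈ hverts H, x i := by
  refine hES.induction_on (P := fun H => (∀ i ∈ hverts H, x i ≤ τ) →
    ∑ e ∈ H, ∏ i ∈ e, x i ≤ (k - 2 : ℕ) * τ * ∑ i ∈ hverts H, x i)
    (by simp [hverts]) ?_ H hH hfree hτ
  intro H v hH hv hdeg ih hτ
  have hτ0 : 0 ≤ τ := (hx v).trans (hτ v hv)
  have hat : ∑ e ∈ H with v ∈ e, ∏ i ∈ e, x i ≤ (k - 2 : ℕ) * τ * x v := by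
    calc ∑ e ∈ H with v ∈ e, ∏ i ∈ e, x i ≤ ∑ e ∈ H with v ∈ e, τ * x v := by
          refine sum_le_sum fun e he => ?_
          obtain ⟨heH, hve⟩ := mem_filter.1 he
          obtain ⟨z, hz⟩ := card_eq_one.1 (by rw [card_erase_of_mem hve, hH e heH] :
            #(e.erase v) = 1)
          rw [← mul_prod_erase _ _ hve, hz, prod_singleton, mul_comm]
          exact mul_le_mul_of_nonneg_right (hτ z (subset_hverts heH
            (mem_of_mem_erase (hz ▸ mem_singleton_self z)))) (hx v)
      _ ≤ (k - 2 : ℕ) * τ * x v := by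
          rw [sum_const, nsmul_eq_mul, ← mul_assoc]
          exact mul_le_mul_of_nonneg_right (mul_le_mul_of_nonneg_right
            (by exact_mod_cast hdeg) hτ0) (hx v)
  have hrest : hverts {e ∈ H | v ∉ e} ⊆ (hverts H).erase v := fun i hi => by
    obtain ⟨e, he, hie⟩ := mem_hverts.1 hi
    obtain ⟨heH, hve⟩ := mem_filter.1 he
    exact mem_erase.2 ⟨ne_of_mem_of_not_mem hie hve, subset_hverts heH hie⟩
  have hoff := ih fun i hi => hτ i (erase_subset _ _ (hrest hi))
  have hsum := sum_le_sum_of_subset_of_nonneg hrest fun i _ _ => hx i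
  rw [sum_erase_eq_sub hv] at hsum
  rw [← sum_filter_add_sum_filter_not H (v ∈ ·)]
  have hc : (0 : ℝ) ≤ (k - 2 : ℕ) * τ := by positivity
  nlinarith

section Lagrangian

variable {α : Type*} {G : HG} {V : Finset ℕ} {x : ℕ → ℝ} {f : ℕ → α}

def IsProperColoring (G : HG) (f : ℕ → α) : Prop :=
  ∀ e ∈ G, ∀ u ∈ e, ∀ v ∈ e, u ≠ v → f u ≠ f v

variable [DecidableEq α]

noncomputable def classMass (V : Finset ℕ) (x : ℕ → ℝ) (f : ℕ → α) (a : α) : ℝ :=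
  ∑ i ∈ V with f i = a, x i

lemma sum_classMass {s : Finset α} (hs : ∀ i ∈ V, f i ∈ s) :
    ∑ a ∈ s, classMass V x f a = ∑ i ∈ V, x i :=
  sum_fiberwise_of_maps_to hs x

lemma sum_mul_classMass {s : Finset α} (hs : ∀ i ∈ V, f i ∈ s) :
    ∑ i ∈ V, x i * classMass V x f (f i) = ∑ a ∈ s, classMass V x f a ^ 2 := by
  rw [← sum_fiberwise_of_maps_to hs]
  refine sum_congr rfl fun a _ => ?_
  rw [sq, classMass, sum_mul]
  exact sum_congr rfl fun i hi => by rw [(mem_filter.1 hi).2]; rfl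

lemma one_div_card_le_sum_sq {ι : Type*} {s : Finset ι} {y : ι → ℝ} (h : ∑ a ∈ s, y a = 1) :
    1 / #s ≤ ∑ a ∈ s, y a ^ 2 := by
  have hcs := sq_sum_le_card_mul_sum_sq (s := s) (f := y)
  have hs : (0 : ℝ) < #s := by
    rcases s.eq_empty_or_nonempty with rfl | hs
    · simp at h
    · exact_mod_cast hs.card_pos
  rw [h, one_pow] at hcs
  rw [div_le_iff₀ hs]
  linarith

lemma sum_offDiag_pair {a b : ℕ} (hab : a ≠ b) :
    ∑ p ∈ ({a, b} : Finset ℕ).offDiag, x p.1 * x p.2 = 2 * (x a * x b) := by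
  have : ({a, b} : Finset ℕ).offDiag = {(a, b), (b, a)} := by
    ext ⟨u, v⟩
    simp only [mem_offDiag, mem_insert, mem_singleton, Prod.mk.injEq]
    constructor
    · rintro ⟨hu | hu, hv | hv, huv⟩ <;> subst hu hv <;> simp_all
    · rintro (⟨rfl, rfl⟩ | ⟨rfl, rfl⟩) <;> simp [hab, hab.symm]
  rw [this, sum_pair (by simp [hab]), two_mul, mul_comm (x b)]

lemma sum_biUnion_offDiag (hG : Uniform 2 G) :
    ∑ p ∈ G.biUnion offDiag, x p.1 * x p.2 = 2 * ∑ e ∈ G, ∏ i ∈ e, x i := by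
  have hdisj : (G : Set (Finset ℕ)).PairwiseDisjoint offDiag := by
    intro e₁ h₁ e₂ h₂ hne
    refine disjoint_left.2 fun p hp₁ hp₂ => hne ?_
    obtain ⟨h₁a, h₁b, hp⟩ := mem_offDiag.1 hp₁
    obtain ⟨h₂a, h₂b, -⟩ := mem_offDiag.1 hp₂
    rw [hG.eq_pair h₁ h₁a h₁b hp, hG.eq_pair h₂ h₂a h₂b hp]
  rw [sum_biUnion hdisj, mul_sum]
  refine sum_congr rfl fun e he => ?_
  obtain ⟨a, b, hab, rfl⟩ := card_eq_two.1 (hG e he)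
  rw [sum_offDiag_pair hab, prod_pair hab]

lemma sum_filter_color_ne (hx1 : ∑ i ∈ V, x i = 1) :
    ∑ p ∈ V ×ˢ V with f p.1 ≠ f p.2, x p.1 * x p.2
      = 1 - ∑ i ∈ V, x i * classMass V x f (f i) := by
  rw [sum_filter, sum_product]
  conv_rhs => rw [← hx1]
  rw [← sum_sub_distrib]
  refine sum_congr rfl fun i _ => ?_
  have hsplit := sum_filter_add_sum_filter_not V (fun j => f j = f i) x
  rw [hx1] at hsplit
  calc ∑ j ∈ V, (if f i ≠ f j then x i * x j else 0) = x i * ∑ j ∈ V with ¬ f j = f i, x j := by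
        rw [mul_sum, sum_filter]
        exact sum_congr rfl fun j _ => by by_cases h : f j = f i <;> simp [h, eq_comm (a := f i)]
    _ = x i - x i * classMass V x f (f i) := by rw [classMass]; linear_combination x i * hsplit

/-- The ordered pairs `(a, b)`, `(b, a)` of the edges and the pairs `(v, u v)` are disjoint sets of
pairs of distinct colours, and the right-hand side is the weight of all such pairs. -/
theorem two_mul_sum_prod_add_le (hG : Uniform 2 G) (hGV : ∀ e ∈ G, e ⊆ V)
    (hf : IsProperColoring G f) (hx : ∀ i, 0 ≤ x i) (hx1 : ∑ i ∈ V, x i = 1)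
    {D : Finset ℕ} {u : ℕ → ℕ} (hD : D ⊆ V)
    (hu : ∀ v ∈ D, u v ∈ V ∧ f (u v) ≠ f v ∧ {v, u v} ∉ G) :
    2 * ∑ e ∈ G, ∏ i ∈ e, x i + ∑ v ∈ D, x v * x (u v)
      ≤ 1 - ∑ i ∈ V, x i * classMass V x f (f i) := by
  have hP : ∑ p ∈ D.image (fun v => (v, u v)), x p.1 * x p.2 = ∑ v ∈ D, x v * x (u v) :=
    sum_image fun v _ w _ h => (Prod.mk.inj h).1
  have hdisj : Disjoint (G.biUnion offDiag) (D.image fun v => (v, u v)) := by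
    refine disjoint_right.2 fun p hp hpE => ?_
    obtain ⟨v, hv, rfl⟩ := mem_image.1 hp
    obtain ⟨e, he, hpe⟩ := mem_biUnion.1 hpE
    obtain ⟨hve, hue, hne⟩ := mem_offDiag.1 hpe
    exact (hu v hv).2.2 (hG.eq_pair he hve hue hne ▸ he)
  have hsub : G.biUnion offDiag ∪ D.image (fun v => (v, u v))
      ⊆ (V ×ˢ V).filter fun p => f p.1 ≠ f p.2 := by
    refine union_subset (fun p hp => ?_) (fun p hp => ?_)
    · obtain ⟨e, he, hpe⟩ := mem_biUnion.1 hp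
      obtain ⟨h₁, h₂, hne⟩ := mem_offDiag.1 hpe
      exact mem_filter.2 ⟨mem_product.2 ⟨hGV e he h₁, hGV e he h₂⟩, hf e he _ h₁ _ h₂ hne⟩
    · obtain ⟨v, hv, rfl⟩ := mem_image.1 hp
      exact mem_filter.2 ⟨mem_product.2 ⟨hD hv, (hu v hv).1⟩, (hu v hv).2.1.symm⟩
  rw [← sum_biUnion_offDiag hG, ← hP, ← sum_union hdisj, ← sum_filter_color_ne hx1]
  exact sum_le_sum_of_subset_of_nonneg hsub fun p _ _ => mul_nonneg (hx _) (hx _)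

theorem two_mul_sum_prod_le_of_card_image_le (hG : Uniform 2 G) (hGV : ∀ e ∈ G, e ⊆ V)
    (hf : IsProperColoring G f) (hx : ∀ i, 0 ≤ x i) (hx1 : ∑ i ∈ V, x i = 1) {c : ℕ}
    (hc : #(V.image f) ≤ c) : 2 * ∑ e ∈ G, ∏ i ∈ e, x i ≤ 1 - 1 / c := by
  have hs : ∀ i ∈ V, f i ∈ V.image f := fun i hi => mem_image_of_mem f hi
  have hmain := two_mul_sum_prod_add_le hG hGV hf hx hx1 (empty_subset V) (u := id) (by simp)
  have hcs := one_div_card_le_sum_sq ((sum_classMass hs).trans hx1)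
  rw [← sum_mul_classMass hs] at hcs
  have hpos : (0 : ℝ) < #(V.image f) := by
    rcases V.eq_empty_or_nonempty with rfl | hV
    · simp at hx1
    · exact_mod_cast (hV.image f).card_pos
  have hcc : 1 / (c : ℝ) ≤ 1 / #(V.image f) :=
    one_div_le_one_div_of_le hpos (by exact_mod_cast hc)
  simp only [sum_empty, add_zero] at hmain
  linarith

lemma IsProperColoring.merge (hG : Uniform 2 G) (hf : IsProperColoring G f) (L : Finset α) :
    IsProperColoring {e ∈ G | ¬ ∀ i ∈ e, f i ∈ L}
      fun i => if f i ∈ L then none else some (f i) := by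
  intro e he a ha b hb hab
  obtain ⟨heG, hL⟩ := mem_filter.1 he
  rw [hG.eq_pair heG ha hb hab] at hL
  by_cases haL : f a ∈ L <;> by_cases hbL : f b ∈ L
  · simp [haL, hbL] at hL
  all_goals simp [haL, hbL, hf e heG a ha b hb hab]

lemma card_image_merge_le [Fintype α] (L : Finset α) :
    #(V.image fun i => if f i ∈ L then none else some (f i)) ≤ Fintype.card α - #L + 1 := by
  calc _ ≤ #(insert none (Lᶜ.image some)) :=
        card_le_card (image_subset_iff.2 fun i _ => by by_cases hi : f i ∈ L <;> simp [hi])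
    _ ≤ #Lᶜ + 1 := (card_insert_le _ _).trans (by gcongr; exact card_image_le)
    _ = Fintype.card α - #L + 1 := by rw [card_compl]

end Lagrangian

section Stability

variable {m : ℕ} {T G : HG} {V : Finset ℕ} {x : ℕ → ℝ} {f : ℕ → Fin m} {δ τ : ℝ}

/-- `1 - 1/m` is the largest Lagrangian of an `m`-partite graph. -/
structure IsNearExtremal (G : HG) (V : Finset ℕ) (x : ℕ → ℝ) (f : ℕ → Fin m) (δ : ℝ) :
    Prop where
  uniform : Uniform 2 G
  subset : ∀ e ∈ G, e ⊆ V
  proper : IsProperColoring G f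
  nonneg : ∀ i, 0 ≤ x i
  sum_eq_one : ∑ i ∈ V, x i = 1
  le_two_mul : 1 - 1 / m - δ ≤ 2 * ∑ e ∈ G, ∏ i ∈ e, x i

namespace IsNearExtremal

lemma one_div_le_sum_mul_classMass (h : IsNearExtremal G V x f δ) :
    1 / (m : ℝ) ≤ ∑ i ∈ V, x i * classMass V x f (f i) := by
  have hs : ∀ i ∈ V, f i ∈ (univ : Finset (Fin m)) := fun i _ => mem_univ _
  rw [sum_mul_classMass hs]
  simpa using one_div_card_le_sum_sq ((sum_classMass hs).trans h.sum_eq_one)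

lemma mul_sum_le (h : IsNearExtremal G V x f δ) {D : Finset ℕ} {u : ℕ → ℕ} (hD : D ⊆ V)
    (hu : ∀ v ∈ D, u v ∈ V ∧ f (u v) ≠ f v ∧ {v, u v} ∉ G ∧ τ ≤ x (u v)) :
    τ * ∑ v ∈ D, x v ≤ δ := by
  have hmain := two_mul_sum_prod_add_le h.uniform h.subset h.proper h.nonneg h.sum_eq_one hD
    fun v hv => ⟨(hu v hv).1, (hu v hv).2.1, (hu v hv).2.2.1⟩
  calc τ * ∑ v ∈ D, x v = ∑ v ∈ D, x v * τ := by rw [mul_sum]; simp_rw [mul_comm]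
    _ ≤ ∑ v ∈ D, x v * x (u v) :=
        sum_le_sum fun v hv => mul_le_mul_of_nonneg_left (hu v hv).2.2.2 (h.nonneg v)
    _ ≤ δ := by linarith [h.one_div_le_sum_mul_classMass, h.le_two_mul]

lemma classMass_sub_sq_le (h : IsNearExtremal G V x f δ) (a : Fin m) :
    (classMass V x f a - 1 / m) ^ 2 ≤ δ := by
  have hs : ∀ i ∈ V, f i ∈ (univ : Finset (Fin m)) := fun i _ => mem_univ _
  have hup := two_mul_sum_prod_add_le h.uniform h.subset h.proper h.nonneg h.sum_eq_one
    (empty_subset V) (u := id) (by simp)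
  rw [sum_mul_classMass hs, sum_empty, add_zero] at hup
  have hsum := (sum_classMass hs).trans h.sum_eq_one
  have hm : (m : ℝ) ≠ 0 := by have := a.pos; positivity
  have hvar : ∑ b, (classMass V x f b - 1 / m) ^ 2 = ∑ b, classMass V x f b ^ 2 - 1 / m := by
    simp only [sub_sq, sum_add_distrib, sum_sub_distrib, ← sum_mul, ← mul_sum, hsum, sum_const,
      card_univ, Fintype.card_fin, nsmul_eq_mul]
    field_simp
    ring
  calc _ ≤ ∑ b, (classMass V x f b - 1 / m) ^ 2 :=
        single_le_sum (f := fun b => (classMass V x f b - 1 / m) ^ 2)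
          (fun b _ => sq_nonneg _) (mem_univ a)
    _ ≤ δ := by rw [hvar]; linarith [h.le_two_mul]

lemma pair_mem_of_le_of_le (h : IsNearExtremal G V x f δ) (hδ : δ < τ ^ 2) (hτ : 0 ≤ τ)
    {a b : ℕ} (ha : a ∈ V) (hb : b ∈ V) (hab : f a ≠ f b) (hxa : τ ≤ x a) (hxb : τ ≤ x b) :
    {a, b} ∈ G := by
  by_contra hG
  have := h.mul_sum_le (D := {a}) (u := fun _ => b) (by simpa)
    (by simpa [hb, hab.symm, hG, hxb])
  rw [sum_singleton] at this
  nlinarith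

lemma exists_not_pair_mem (h : IsNearExtremal G V x f δ) (hm : 2 ≤ m)
    (hT : IsTreeGraph T (m + 1)) (hfree : ¬ IsCopyIn T G) (hδ : δ < τ ^ 2) (hτ : 0 ≤ τ)
    {B : Finset (Fin m)} (hB : #B = m - 1) {w : Fin m → ℕ}
    (hw : ∀ b ∈ B, w b ∈ V ∧ f (w b) = b ∧ τ ≤ x (w b))
    {v₁ v₂ : ℕ} (h₁ : f v₁ ∉ B) (h₂ : f v₂ ∉ B) (hne : v₁ ≠ v₂)
    (hv₂ : ∀ b ∈ B, {v₂, w b} ∈ G) : ∃ b ∈ B, {v₁, w b} ∉ G := by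
  by_contra! hv₁
  have hinj : Set.InjOn w B := fun a ha b hb hab =>
    (hw a ha).2.1.symm.trans (hab ▸ (hw b hb).2.1)
  have hout : ∀ {v}, f v ∉ B → v ∉ B.image w := fun hv hmem => by
    obtain ⟨b, hb, rfl⟩ := mem_image.1 hmem
    exact hv ((hw b hb).2.1.symm ▸ hb)
  refine hfree (hT.isCopyIn_of_join (by omega) ?_ ?_ (hout h₁) (hout h₂) hne ?_ ?_)
  · rw [card_image_of_injOn hinj, hB]
    omega
  · simp only [mem_image]
    rintro _ ⟨a, ha, rfl⟩ _ ⟨b, hb, rfl⟩ hab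
    refine h.pair_mem_of_le_of_le hδ hτ (hw a ha).1 (hw b hb).1 ?_ (hw a ha).2.2 (hw b hb).2.2
    rw [(hw a ha).2.1, (hw b hb).2.1]
    rintro rfl
    exact hab rfl
  · simpa using hv₁
  · simpa using hv₂

lemma mul_sum_sdiff_le (h : IsNearExtremal G V x f δ) (hm : 2 ≤ m)
    (hT : IsTreeGraph T (m + 1)) (hfree : ¬ IsCopyIn T G) (hδ : δ < τ ^ 2) (hτ : 0 ≤ τ)
    {w : Fin m → ℕ} (hw : ∀ a, w a ∈ V ∧ f (w a) = a ∧ τ ≤ x (w a)) :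
    τ * ∑ v ∈ V \ univ.image w, x v ≤ δ := by
  have hnon : ∀ v ∈ V \ univ.image w, ∃ b, b ≠ f v ∧ {v, w b} ∉ G := by
    intro v hv
    obtain ⟨hvV, hvw⟩ := mem_sdiff.1 hv
    obtain ⟨b, hb, hvb⟩ := h.exists_not_pair_mem hm hT hfree hδ hτ (B := univ.erase (f v))
      (by simp) (fun b _ => hw b) (v₁ := v) (v₂ := w (f v)) (by simp) (by simp [(hw _).2.1])
      (fun h' => hvw (h' ▸ mem_image_of_mem w (mem_univ _)))
      fun b hb => h.pair_mem_of_le_of_le hδ hτ (hw _).1 (hw b).1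
        (by rw [(hw _).2.1, (hw b).2.1]; exact (mem_erase.1 hb).1.symm) (hw _).2.2 (hw b).2.2
    exact ⟨b, (mem_erase.1 hb).1, hvb⟩
  have : Nonempty (Fin m) := ⟨⟨0, by omega⟩⟩
  choose! g hg using hnon
  exact h.mul_sum_le sdiff_subset fun v hv =>
    ⟨(hw _).1, (hw _).2.1.trans_ne (hg v hv).1, (hg v hv).2, (hw _).2.2⟩

lemma card_filter_forall_pair_mem_le_one (h : IsNearExtremal G V x f δ) (hm : 2 ≤ m)
    (hT : IsTreeGraph T (m + 1)) (hfree : ¬ IsCopyIn T G) (hδ : δ < τ ^ 2) (hτ : 0 ≤ τ)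
    {B : Finset (Fin m)} (hB : #B = m - 1) {w : Fin m → ℕ}
    (hw : ∀ b ∈ B, w b ∈ V ∧ f (w b) = b ∧ τ ≤ x (w b)) {C : Finset ℕ}
    (hC : ∀ v ∈ C, f v ∉ B) : #{v ∈ C | ∀ b ∈ B, {v, w b} ∈ G} ≤ 1 := by
  refine card_le_one.2 fun v hv v' hv' => by_contra fun hne => ?_
  obtain ⟨b, hb, hvb⟩ := h.exists_not_pair_mem hm hT hfree hδ hτ hB hw
    (hC v (mem_filter.1 hv).1) (hC v' (mem_filter.1 hv').1) hne (mem_filter.1 hv').2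
  exact hvb ((mem_filter.1 hv).2 b hb)

/-- All vertices of the class `a₀` but at most one have a heavy non-neighbour, so the class
weighs less than `2τ`, far from `1/m`. -/
lemma false_of_card_light_eq_one (h : IsNearExtremal G V x f δ) (hm : 2 ≤ m)
    (hT : IsTreeGraph T (m + 1)) (hfree : ¬ IsCopyIn T G) (hδ : δ < τ ^ 2) (hτ : 0 < τ)
    (h3 : 3 * m * τ ≤ 1) {a₀ : Fin m} {w : Fin m → ℕ}
    (hw : ∀ a ≠ a₀, w a ∈ V ∧ f (w a) = a ∧ τ ≤ x (w a))
    (hlight : ∀ i ∈ V, f i = a₀ → x i < τ) : False := by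
  set B := univ.erase a₀
  have hwB : ∀ b ∈ B, w b ∈ V ∧ f (w b) = b ∧ τ ≤ x (w b) := fun b hb => hw b (mem_erase.1 hb).1
  set C := V.filter (f · = a₀)
  set E := C.filter fun v => ∀ b ∈ B, {v, w b} ∈ G
  have hCB : ∀ v ∈ C, f v ∉ B := fun v hv => by simp [B, (mem_filter.1 hv).2]
  have hE := h.card_filter_forall_pair_mem_le_one hm hT hfree hδ hτ.le (by simp [B]) hwB hCB
  have hD : ∀ v ∈ C \ E, ∃ b ∈ B, {v, w b} ∉ G := fun v hv => by
    obtain ⟨hvC, hvE⟩ := mem_sdiff.1 hv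
    by_contra! h'
    exact hvE (mem_filter.2 ⟨hvC, h'⟩)
  have : Nonempty (Fin m) := ⟨⟨0, by omega⟩⟩
  choose! g hgB hg using hD
  have hDsum : τ * ∑ v ∈ C \ E, x v ≤ δ :=
    h.mul_sum_le (sdiff_subset.trans (filter_subset _ _)) fun v hv =>
      ⟨(hwB _ (hgB v hv)).1, (hwB _ (hgB v hv)).2.1.trans_ne fun hgv =>
        hCB v (mem_sdiff.1 hv).1 (hgv ▸ hgB v hv), hg v hv, (hwB _ (hgB v hv)).2.2⟩
  have hEsum : ∑ v ∈ E, x v ≤ τ := by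
    calc ∑ v ∈ E, x v ≤ #E • τ := sum_le_card_nsmul _ _ _ fun v hv =>
          (hlight v (mem_filter.1 (mem_filter.1 hv).1).1 (mem_filter.1 (mem_filter.1 hv).1).2).le
      _ ≤ 1 • τ := nsmul_le_nsmul_left hτ.le hE
      _ = τ := one_nsmul τ
  have hY : classMass V x f a₀ = ∑ v ∈ C \ E, x v + ∑ v ∈ E, x v := by
    rw [classMass]
    exact (sum_sdiff (filter_subset _ _)).symm
  have hvar := h.classMass_sub_sq_le a₀
  have hDlt : ∑ v ∈ C \ E, x v < τ := by nlinarith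
  have h1m : 3 * τ ≤ 1 / m := by
    rw [le_div_iff₀ (by positivity)]
    linarith
  nlinarith

lemma sum_prod_filter_le (h : IsNearExtremal G V x f δ) (hES : SatisfiesES T (m + 1))
    (hfree : ¬ IsCopyIn T G) (hτ : 0 ≤ τ) {L : Finset (Fin m)}
    (hlight : ∀ i ∈ V, f i ∈ L → x i < τ) :
    ∑ e ∈ G with ∀ i ∈ e, f i ∈ L, ∏ i ∈ e, x i ≤ (m - 1 : ℕ) * τ := by
  have hV : hverts {e ∈ G | ∀ i ∈ e, f i ∈ L} ⊆ V := fun i hi => by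
    obtain ⟨e, he, hie⟩ := mem_hverts.1 hi
    exact h.subset e (mem_filter.1 he).1 hie
  have hsparse := hES.sum_prod_le h.nonneg (h.uniform.mono (filter_subset _ _))
    (fun c => hfree (c.mono (filter_subset _ _))) (τ := τ) fun i hi => by
      obtain ⟨e, he, hie⟩ := mem_hverts.1 hi
      exact (hlight i (hV hi) ((mem_filter.1 he).2 i hie)).le
  have hsum : ∑ i ∈ hverts {e ∈ G | ∀ i ∈ e, f i ∈ L}, x i ≤ 1 :=
    h.sum_eq_one ▸ sum_le_sum_of_subset_of_nonneg hV fun i _ _ => h.nonneg i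
  calc _ ≤ (m + 1 - 2 : ℕ) * τ * ∑ i ∈ hverts {e ∈ G | ∀ i ∈ e, f i ∈ L}, x i := hsparse
    _ ≤ (m + 1 - 2 : ℕ) * τ * 1 := by gcongr
    _ = (m - 1 : ℕ) * τ := by rw [mul_one]; rfl

/-- Merging the light classes into one leaves at most `m - 1` colours on the edges outside the
light part, while the light part is sparse. -/
lemma false_of_two_le_card_light (h : IsNearExtremal G V x f δ)
    (hES : SatisfiesES T (m + 1)) (hfree : ¬ IsCopyIn T G) (hτ : 0 ≤ τ)
    (hmargin : δ + 2 * (m - 1) * τ < 1 / (m - 1) - 1 / m) {L : Finset (Fin m)}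
    (hL : 2 ≤ #L) (hlight : ∀ i ∈ V, f i ∈ L → x i < τ) : False := by
  have hLm : #L ≤ m := card_le_univ L |>.trans_eq (Fintype.card_fin m)
  have hsplit := sum_filter_add_sum_filter_not G (fun e => ∀ i ∈ e, f i ∈ L)
    fun e => ∏ i ∈ e, x i
  have hlightsum := h.sum_prod_filter_le hES hfree hτ hlight
  have hrest := two_mul_sum_prod_le_of_card_image_le (h.uniform.mono (filter_subset _ _))
    (fun e he => h.subset e (mem_filter.1 he).1) (h.proper.merge h.uniform L) h.nonneg
    h.sum_eq_one ((card_image_merge_le L).trans (c := m - 1) (by simp; omega))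
  have hcast : ((m - 1 : ℕ) : ℝ) = m - 1 := by
    rw [Nat.cast_sub (by omega)]
    simp
  rw [hcast] at hlightsum hrest
  linarith [h.le_two_mul]

/-- Call a colour class heavy if it contains a vertex of weight at least `τ`. If all classes are
heavy, one heavy vertex from each class carries all but `δ / τ` of the weight. -/
theorem exists_cover (h : IsNearExtremal G V x f δ) (hm : 2 ≤ m)
    (hT : IsTreeGraph T (m + 1)) (hES : SatisfiesES T (m + 1)) (hfree : ¬ IsCopyIn T G)
    (hτ : 0 < τ) (hδ : δ < τ ^ 2) (h3 : 3 * m * τ ≤ 1)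
    (hmargin : δ + 2 * (m - 1) * τ < 1 / (m - 1) - 1 / m) :
    ∃ I ⊆ V, #I ≤ m ∧ τ * (1 - ∑ i ∈ I, x i) ≤ δ := by
  set heavy : Fin m → Prop := fun a => ∃ i ∈ V, f i = a ∧ τ ≤ x i
  choose! w hw using fun a (ha : heavy a) => ha
  set L := univ.filter fun a => ¬ heavy a
  have hlight : ∀ i ∈ V, f i ∈ L → x i < τ := fun i hi hiL => by
    by_contra! hx
    exact (mem_filter.1 hiL).2 ⟨i, hi, rfl, hx⟩
  have hheavy : ∀ a ∉ L, w a ∈ V ∧ f (w a) = a ∧ τ ≤ x (w a) := fun a ha =>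
    hw a (by simpa [L] using ha)
  obtain hL | hL | hL : #L = 0 ∨ #L = 1 ∨ 2 ≤ #L := by omega
  · have hall : ∀ a, w a ∈ V ∧ f (w a) = a ∧ τ ≤ x (w a) := fun a =>
      hheavy a (by simp [card_eq_zero.1 hL])
    have hIV : univ.image w ⊆ V := image_subset_iff.2 fun a _ => (hall a).1
    refine ⟨univ.image w, hIV, card_image_le.trans (by simp), ?_⟩
    rw [← h.sum_eq_one, ← sum_sdiff hIV, add_sub_cancel_right]
    exact h.mul_sum_sdiff_le hm hT hfree hδ hτ.le hall
  · obtain ⟨a₀, ha₀⟩ := card_eq_one.1 hL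
    exact (h.false_of_card_light_eq_one (a₀ := a₀) hm hT hfree hδ hτ h3
      (fun a ha => hheavy a (by simp [ha₀, ha]))
      fun i hi hia => hlight i hi (by simp [ha₀, hia])).elim
  · exact (h.false_of_two_le_card_light hES hfree hτ.le hmargin hL hlight).elim

end IsNearExtremal

end Stability

lemma exists_stability_constants {m : ℕ} (hm : 2 ≤ m) {ε : ℝ} (hε0 : 0 < ε) (hε1 : ε < 1) :
    ∃ τ δ : ℝ, 0 < τ ∧ 0 < δ ∧ δ < τ ^ 2 ∧ δ ≤ ε * τ ∧ 3 * m * τ ≤ 1 ∧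
      δ + 2 * (m - 1) * τ < 1 / (m - 1) - 1 / m := by
  have hm' : (2 : ℝ) ≤ m := by exact_mod_cast hm
  set τ : ℝ := 1 / (4 * m ^ 3) with hτdef
  have hτ : 0 < τ := by positivity
  have hmτ : 2 * m * τ = 1 / (2 * m ^ 2) := by
    rw [hτdef]
    field_simp
    ring
  have hmτ' : 2 * m * τ ≤ 1 / 8 :=
    hmτ ▸ one_div_le_one_div_of_le (by norm_num) (by nlinarith)
  have hτsq : τ ^ 2 ≤ τ := by
    rw [sq]
    exact mul_le_of_le_one_left hτ.le (by nlinarith)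
  have hδτ : ε * τ ^ 2 < τ ^ 2 := mul_lt_of_lt_one_left (pow_pos hτ 2) hε1
  refine ⟨τ, ε * τ ^ 2, hτ, by positivity, hδτ, mul_le_mul_of_nonneg_left hτsq hε0.le,
    by nlinarith, ?_⟩
  have hdiff : 1 / ((m : ℝ) - 1) - 1 / m = 1 / (m * (m - 1)) := by
    have : (m : ℝ) - 1 ≠ 0 := by linarith
    field_simp
    ring
  have hlt : 1 / (2 * (m : ℝ) ^ 2) < 1 / (m * (m - 1)) :=
    one_div_lt_one_div_of_lt (by nlinarith) (by nlinarith)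
  nlinarith

/-- Stability of the Lagrangian for `T`-free graphs, `T` a tree
satisfying the Erdős–Sós conjecture. -/
theorem stmt_18 (k : ℕ) (hk : 3 ≤ k)
    (T : HG) (hT : IsTreeGraph T k) (hES : SatisfiesES T k)
    (ε : ℝ) (hε0 : 0 < ε) (hε1 : ε < 1) :
    ∃ δ : ℝ, 0 < δ ∧
      ∀ t : ℕ, ∀ G : HG, Uniform 2 G → (∀ e ∈ G, e ⊆ Finset.range t) →
        ¬ IsCopyIn T G →
        ∀ x : ℕ → ℝ, (∀ i, 0 ≤ x i) → (∑ i ∈ Finset.range t, x i) = 1 →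
          ((k : ℝ) - 2) / ((k : ℝ) - 1) - δ ≤ pPoly 2 G x →
          ∃ I : Finset ℕ, I ⊆ Finset.range t ∧ I.card ≤ k - 1 ∧
            1 - ε ≤ ∑ i ∈ I, x i := by
  obtain ⟨m, rfl⟩ : ∃ m, k = m + 1 := ⟨k - 1, by omega⟩
  have hm : 2 ≤ m := by omega
  obtain ⟨τ, δ, hτ, hδ, hδτ, hδε, h3, hmargin⟩ := exists_stability_constants hm hε0 hε1
  refine ⟨δ, hδ, fun t G hG hGt hfree x hx hx1 hp => ?_⟩
  obtain ⟨f, hf⟩ : MPartite m G := hES.mPartite (by omega) hG hfree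
  have h : IsNearExtremal G (range t) x f δ := by
    refine ⟨hG, hGt, hf, hx, hx1, ?_⟩
    have hm0 : (m : ℝ) ≠ 0 := by positivity
    have : ((m + 1 : ℕ) - 2 : ℝ) / ((m + 1 : ℕ) - 1) = 1 - 1 / m := by
      push_cast
      rw [add_sub_cancel_right]
      field_simp
      ring
    rw [this, pPoly] at hp
    simpa using hp
  obtain ⟨I, hIV, hI, hIx⟩ := h.exists_cover hm hT hES hfree hτ hδτ h3 hmargin
  refine ⟨I, hIV, hI, ?_⟩
  have : 1 - ∑ i ∈ I, x i ≤ ε := le_of_mul_le_mul_left (by linarith) hτ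
  linarith
end
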